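/- arXiv:math/0509259 — 4 statements merged into one kernel-verified Lean document; each statement's English description precedes it below -/
import Mathlib

section
/- The chromatic number of the Sierpiński gasket graph S_n equals 3 for every n ≥ 1. -/
/-- Vertex set of the Sierpiński gasket graph `Sₙ`, realized in the triangular
lattice with side length `2^(n-1)`. (`sierpVerts 0` is an unused dummy.) -/
def sierpVerts : ℕ → Finset (ℤ × ℤ)
  | 0 => {(0, 0)}
  | 1 => {(0, 0), (1, 0), (0, 1)}
  | n + 2 =>
      sierpVerts (n + 1) ∪
        (sierpVerts (n + 1)).image (fun p => (p.1 + 2 ^ n, p.2)) ∪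
        (sierpVerts (n + 1)).image (fun p => (p.1, p.2 + 2 ^ n))

/-- Edge set (as ordered pairs, up to the symmetrization below) of `Sₙ`:
`S₁ = K₃`, and `S_{n+2}` is the union of three shifted copies of `S_{n+1}`. -/
def sierpEdges : ℕ → Finset ((ℤ × ℤ) × (ℤ × ℤ))
  | 0 => ∅
  | 1 => {((0, 0), (1, 0)), ((0, 0), (0, 1)), ((1, 0), (0, 1))}
  | n + 2 =>
      sierpEdges (n + 1) ∪
        (sierpEdges (n + 1)).image
          (fun e => ((e.1.1 + 2 ^ n, e.1.2), (e.2.1 + 2 ^ n, e.2.2))) ∪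
        (sierpEdges (n + 1)).image
          (fun e => ((e.1.1, e.1.2 + 2 ^ n), (e.2.1, e.2.2 + 2 ^ n)))

/-- The Sierpiński gasket graph `Sₙ` (meaningful for `n ≥ 1`). -/
def sierpGraph (n : ℕ) : SimpleGraph {p : ℤ × ℤ // p ∈ sierpVerts n} where
  Adj u v := u ≠ v ∧ ((u.1, v.1) ∈ sierpEdges n ∨ (v.1, u.1) ∈ sierpEdges n)
  symm := ⟨by rintro u v ⟨h1, h2⟩; exact ⟨h1.symm, h2.symm⟩⟩
  loopless := ⟨fun u h => h.1 rfl⟩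

instance (n : ℕ) : DecidableRel (sierpGraph n).Adj := fun u v =>
  inferInstanceAs (Decidable (_ ∧ _))

/-- The three corner (degree-two) vertices of `Sₙ`. -/
def sierpCorners (n : ℕ) : Finset (ℤ × ℤ) :=
  {(0, 0), (2 ^ (n - 1), 0), (0, 2 ^ (n - 1))}

/-- The coloring function: `x + 2y mod 3`. -/
def sierpColor (p : ℤ × ℤ) : ZMod 3 := (p.1 : ZMod 3) + 2 * p.2

lemma sierpColor_ne (n : ℕ) : ∀ e ∈ sierpEdges n, sierpColor e.1 ≠ sierpColor e.2 := by
  induction n using Nat.strong_induction_on with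
  | _ n ih =>
    match n with
    | 0 => intro e he; simp [sierpEdges] at he
    | 1 => intro e he; fin_cases he <;> decide
    | n + 2 =>
      intro e he
      simp only [sierpEdges, Finset.mem_union, Finset.mem_image] at he
      rcases he with (he | ⟨e', he', rfl⟩) | ⟨e', he', rfl⟩
      · exact ih (n+1) (by omega) e he
      · have := ih (n+1) (by omega) e' he'
        simp only [sierpColor] at this ⊢
        push_cast
        intro h; apply this; linear_combination h
      · have := ih (n+1) (by omega) e' he'
        simp only [sierpColor] at this ⊢
        push_cast
        intro h; apply this; linear_combination h

lemma base_verts (n : ℕ) (hn : 1 ≤ n) :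
    ((0,0) : ℤ × ℤ) ∈ sierpVerts n ∧ ((1,0) : ℤ × ℤ) ∈ sierpVerts n ∧
      ((0,1) : ℤ × ℤ) ∈ sierpVerts n := by
  induction n using Nat.strong_induction_on with
  | _ n ih =>
    match n with
    | 1 => refine ⟨?_, ?_, ?_⟩ <;> decide
    | n + 2 =>
      obtain ⟨h1, h2, h3⟩ := ih (n+1) (by omega) (by omega)
      refine ⟨?_, ?_, ?_⟩ <;>
        · simp only [sierpVerts, Finset.mem_union]
          exact Or.inl (Or.inl (by assumption))

lemma base_edges (n : ℕ) (hn : 1 ≤ n) :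
    (((0,0),(1,0)) : (ℤ×ℤ)×(ℤ×ℤ)) ∈ sierpEdges n ∧
    (((0,0),(0,1)) : (ℤ×ℤ)×(ℤ×ℤ)) ∈ sierpEdges n ∧
    (((1,0),(0,1)) : (ℤ×ℤ)×(ℤ×ℤ)) ∈ sierpEdges n := by
  induction n using Nat.strong_induction_on with
  | _ n ih =>
    match n with
    | 1 => refine ⟨?_, ?_, ?_⟩ <;> decide
    | n + 2 =>
      obtain ⟨h1, h2, h3⟩ := ih (n+1) (by omega) (by omega)
      refine ⟨?_, ?_, ?_⟩ <;>
        · simp only [sierpEdges, Finset.mem_union]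
          exact Or.inl (Or.inl (by assumption))

theorem sierp_chromatic_number (n : ℕ) (hn : 1 ≤ n) :
    (sierpGraph n).chromaticNumber = 3 := by
  obtain ⟨hv1, hv2, hv3⟩ := base_verts n hn
  obtain ⟨he1, he2, he3⟩ := base_edges n hn
  apply le_antisymm
  · have C : (sierpGraph n).Coloring (ZMod 3) :=
      SimpleGraph.Coloring.mk (fun v => sierpColor v.1) (by
        rintro u v ⟨hne, h | h⟩
        · exact sierpColor_ne n _ h
        · exact (sierpColor_ne n _ h).symm)
    have := C.colorable.chromaticNumber_le
    simpa using this
  · by_contra h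
    push_neg at h
    have h2 : (sierpGraph n).chromaticNumber ≤ (2 : ℕ) := by
      have h3 : (sierpGraph n).chromaticNumber < ((3 : ℕ) : ℕ∞) := by exact_mod_cast h
      exact Order.le_of_lt_add_one (by exact_mod_cast h3)
    rw [SimpleGraph.chromaticNumber_le_iff_colorable] at h2
    obtain ⟨C⟩ := h2
    set a : {p : ℤ × ℤ // p ∈ sierpVerts n} := ⟨(0,0), hv1⟩
    set b : {p : ℤ × ℤ // p ∈ sierpVerts n} := ⟨(1,0), hv2⟩
    set c : {p : ℤ × ℤ // p ∈ sierpVerts n} := ⟨(0,1), hv3⟩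
    have hab : C a ≠ C b := C.valid ⟨by simp [a, b, Subtype.ext_iff, Prod.ext_iff], Or.inl he1⟩
    have hac : C a ≠ C c := C.valid ⟨by simp [a, c, Subtype.ext_iff, Prod.ext_iff], Or.inl he2⟩
    have hbc : C b ≠ C c := C.valid ⟨by simp [b, c, Subtype.ext_iff, Prod.ext_iff], Or.inl he3⟩
    have ha2 := (C a).2
    have hb2 := (C b).2
    have hc2 := (C c).2
    have e1 : (C a).1 ≠ (C b).1 := fun h => hab (Fin.ext h)
    have e2 : (C a).1 ≠ (C c).1 := fun h => hac (Fin.ext h)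
    have e3 : (C b).1 ≠ (C c).1 := fun h => hbc (Fin.ext h)
    omega
end

section
/- The Sierpiński gasket graph S_n is Hamiltonian for every n ≥ 1: it contains a cycle passing through all of its vertices. -/
/-- symmetrized edge relation -/
def E (n : ℕ) (u v : ℤ × ℤ) : Prop := (u, v) ∈ sierpEdges n ∨ (v, u) ∈ sierpEdges n

instance (n : ℕ) : DecidableRel (E n) := fun _ _ => inferInstanceAs (Decidable (_ ∨ _))

lemma E.symm {n u v} (h : E n u v) : E n v u := h.elim .inr .inl

/-- "good path": list with edge-chain, nodup, given head, last, covering exactly S -/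
def GP (n : ℕ) (a b : ℤ × ℤ) (S : Finset (ℤ × ℤ)) (l : List (ℤ × ℤ)) : Prop :=
  l.IsChain (E n) ∧ l.Nodup ∧ l.head? = some a ∧ l.getLast? = some b ∧
    (∀ p ∈ l, p ∈ S) ∧ (∀ p ∈ S, p ∈ l)

instance (n a b S l) : Decidable (GP n a b S l) := inferInstanceAs (Decidable (_ ∧ _))

lemma GP.reverse {n a b S l} (h : GP n a b S l) : GP n b a S l.reverse := by
  obtain ⟨hc, hn, hh, hl, hm, hm'⟩ := h
  refine ⟨List.isChain_reverse.2 (hc.imp fun _ _ h => E.symm h), (List.nodup_reverse.2 hn), ?_, ?_, ?_, ?_⟩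
  · rwa [List.head?_reverse]
  · rwa [List.getLast?_reverse]
  · simpa using hm
  · simpa using hm'

lemma GP.congr {n a b S S' l} (h : GP n a b S l) (hS : S = S') : GP n a b S' l := hS ▸ h

lemma GP.append {n a b c S₁ S₂ l₁ l₂} (h₁ : GP n a b S₁ l₁) (h₂ : GP n b c S₂ l₂)
    (hint : ∀ x, x ∈ S₁ → x ∈ S₂ → x = b) :
    GP n a c (S₁ ∪ S₂) (l₁ ++ l₂.tail) := by
  obtain ⟨hc1, hn1, hh1, hl1, hm1, hm1'⟩ := h₁
  obtain ⟨hc2, hn2, hh2, hl2, hm2, hm2'⟩ := h₂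
  obtain ⟨t, rfl⟩ : ∃ t, l₂ = b :: t := by
    cases l₂ with
    | nil => simp at hh2
    | cons x t => simp only [List.head?_cons, Option.some.injEq] at hh2; exact ⟨t, by rw [hh2]⟩
  have hbl1 : b ∈ l₁ := by
    obtain ⟨h, rfl⟩ := List.mem_getLast?_eq_getLast (show b ∈ l₁.getLast? from hl1)
    exact List.getLast_mem h
  have hne1 : l₁ ≠ [] := fun h => by subst h; simp at hh1
  have hbt : b ∉ t := (List.nodup_cons.1 hn2).1
  have htsub : ∀ p ∈ t, p ∈ S₂ := fun p hp => hm2 p (List.mem_cons_of_mem _ hp)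
  refine ⟨?_, ?_, ?_, ?_, ?_, ?_⟩
  · -- chain
    rw [List.isChain_cons] at hc2
    refine List.IsChain.append hc1 hc2.2 ?_
    intro x hx y hy
    rw [hl1] at hx
    cases hx
    exact hc2.1 y hy
  · -- nodup
    rw [List.nodup_append]
    exact ⟨hn1, List.Nodup.of_cons hn2, fun x hx y hy hxy => by
      subst hxy; exact hbt (hint x (hm1 x hx) (htsub x hy) ▸ hy)⟩
  · rw [List.head?_append_of_ne_nil _ hne1]; exact hh1
  · cases t with
    | nil => simp only [List.tail_cons, List.append_nil]
             simp only [List.getLast?_singleton, Option.some.injEq] at hl2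
             rw [hl1, hl2]
    | cons y t' => rw [List.getLast?_append_of_ne_nil _ (by simp)]
                   simpa using hl2
  · intro p hp
    rcases List.mem_append.1 hp with h | h
    · exact Finset.mem_union_left _ (hm1 p h)
    · exact Finset.mem_union_right _ (htsub p h)
  · intro p hp
    rcases Finset.mem_union.1 hp with h | h
    · exact List.mem_append_left _ (hm1' p h)
    · rcases List.mem_cons.1 (hm2' p h) with h' | h'
      · exact List.mem_append_left _ (h' ▸ hbl1)
      · exact List.mem_append_right _ h'

def sh1 (k : ℕ) (p : ℤ × ℤ) : ℤ × ℤ := (p.1 + 2 ^ k, p.2)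
def sh2 (k : ℕ) (p : ℤ × ℤ) : ℤ × ℤ := (p.1, p.2 + 2 ^ k)

lemma sh1_inj (k : ℕ) : Function.Injective (sh1 k) := by
  intro p q h
  simp only [sh1, Prod.mk.injEq, add_left_inj] at h
  exact Prod.ext h.1 h.2

lemma sh2_inj (k : ℕ) : Function.Injective (sh2 k) := by
  intro p q h
  simp only [sh2, Prod.mk.injEq, add_left_inj] at h
  exact Prod.ext h.1 h.2

lemma verts_succ (n : ℕ) : sierpVerts (n + 2) =
    sierpVerts (n + 1) ∪ (sierpVerts (n + 1)).image (sh1 n) ∪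
      (sierpVerts (n + 1)).image (sh2 n) := rfl

lemma edges_succ (n : ℕ) : sierpEdges (n + 2) =
    sierpEdges (n + 1) ∪
      (sierpEdges (n + 1)).image
        (fun e => ((e.1.1 + 2 ^ n, e.1.2), (e.2.1 + 2 ^ n, e.2.2))) ∪
      (sierpEdges (n + 1)).image
        (fun e => ((e.1.1, e.1.2 + 2 ^ n), (e.2.1, e.2.2 + 2 ^ n))) := rfl

lemma E_mono {n u v} (h : E (n + 1) u v) : E (n + 2) u v := by
  rcases h with h | h
  · exact Or.inl (by rw [edges_succ]; exact Finset.mem_union_left _ (Finset.mem_union_left _ h))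
  · exact Or.inr (by rw [edges_succ]; exact Finset.mem_union_left _ (Finset.mem_union_left _ h))

lemma E_sh1 {n u v} (h : E (n + 1) u v) : E (n + 2) (sh1 n u) (sh1 n v) := by
  rcases h with h | h
  · exact Or.inl (Finset.mem_union_left _ (Finset.mem_union_right _
      (Finset.mem_image.2 ⟨(u, v), h, rfl⟩)))
  · exact Or.inr (Finset.mem_union_left _ (Finset.mem_union_right _
      (Finset.mem_image.2 ⟨(v, u), h, rfl⟩)))

lemma E_sh2 {n u v} (h : E (n + 1) u v) : E (n + 2) (sh2 n u) (sh2 n v) := by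
  rcases h with h | h
  · exact Or.inl (Finset.mem_union_right _ (Finset.mem_image.2 ⟨(u, v), h, rfl⟩))
  · exact Or.inr (Finset.mem_union_right _ (Finset.mem_image.2 ⟨(v, u), h, rfl⟩))

lemma GP.lift0 {n a b S l} (h : GP (n + 1) a b S l) : GP (n + 2) a b S l :=
  ⟨h.1.imp fun _ _ => E_mono, h.2.1, h.2.2.1, h.2.2.2.1, h.2.2.2.2.1, h.2.2.2.2.2⟩

lemma GP.liftSh {n a b S l} (f : (ℤ × ℤ) → (ℤ × ℤ)) (hf : Function.Injective f)
    (hE : ∀ u v, E (n + 1) u v → E (n + 2) (f u) (f v))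
    (h : GP (n + 1) a b S l) : GP (n + 2) (f a) (f b) (S.image f) (l.map f) := by
  obtain ⟨hc, hn, hh, hl, hm, hm'⟩ := h
  refine ⟨List.isChain_map_of_isChain f hE hc, hn.map hf, ?_, ?_, ?_, ?_⟩
  · rw [List.head?_map, hh]; rfl
  · rw [List.getLast?_map, hl]; rfl
  · intro p hp
    obtain ⟨q, hq, rfl⟩ := List.mem_map.1 hp
    exact Finset.mem_image.2 ⟨q, hm q hq, rfl⟩
  · intro p hp
    obtain ⟨q, hq, rfl⟩ := Finset.mem_image.1 hp
    exact List.mem_map.2 ⟨q, hm' q hq, rfl⟩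

lemma GP.lift1 {n a b S l} (h : GP (n + 1) a b S l) :
    GP (n + 2) (sh1 n a) (sh1 n b) (S.image (sh1 n)) (l.map (sh1 n)) :=
  h.liftSh _ (sh1_inj n) fun _ _ => E_sh1

lemma GP.lift2 {n a b S l} (h : GP (n + 1) a b S l) :
    GP (n + 2) (sh2 n a) (sh2 n b) (S.image (sh2 n)) (l.map (sh2 n)) :=
  h.liftSh _ (sh2_inj n) fun _ _ => E_sh2

lemma verts_bound : ∀ n, ∀ p ∈ sierpVerts (n + 1),
    0 ≤ p.1 ∧ 0 ≤ p.2 ∧ p.1 + p.2 ≤ 2 ^ n := by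
  intro n
  induction n with
  | zero => decide
  | succ m ih =>
    intro p hp
    rw [verts_succ] at hp
    have h2 : (0:ℤ) < 2 ^ m := by positivity
    rcases Finset.mem_union.1 hp with hp | hp
    · rcases Finset.mem_union.1 hp with hp | hp
      · obtain ⟨h1, h2', h3⟩ := ih p hp
        refine ⟨h1, h2', ?_⟩
        have : (2:ℤ) ^ m ≤ 2 ^ (m + 1) := by
          rw [pow_succ]; nlinarith
        linarith
      · obtain ⟨q, hq, rfl⟩ := Finset.mem_image.1 hp
        obtain ⟨h1, h2', h3⟩ := ih q hq
        refine ⟨by simp [sh1]; linarith, by simpa [sh1] using h2', ?_⟩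
        simp only [sh1]
        rw [pow_succ]; nlinarith
    · obtain ⟨q, hq, rfl⟩ := Finset.mem_image.1 hp
      obtain ⟨h1, h2', h3⟩ := ih q hq
      refine ⟨by simpa [sh2] using h1, by simp [sh2]; linarith, ?_⟩
      simp only [sh2]
      rw [pow_succ]; nlinarith

lemma corner_mem : ∀ n, ((0:ℤ), (0:ℤ)) ∈ sierpVerts (n + 1) ∧
    ((2 ^ n : ℤ), (0:ℤ)) ∈ sierpVerts (n + 1) ∧ ((0:ℤ), (2 ^ n : ℤ)) ∈ sierpVerts (n + 1) := by
  intro n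
  induction n with
  | zero => decide
  | succ m ih =>
    obtain ⟨h0, h1, h2⟩ := ih
    rw [verts_succ]
    refine ⟨Finset.mem_union_left _ (Finset.mem_union_left _ h0), ?_, ?_⟩
    · refine Finset.mem_union_left _ (Finset.mem_union_right _ (Finset.mem_image.2
        ⟨((2:ℤ)^m, (0:ℤ)), h1, ?_⟩))
      simp [sh1]; rw [pow_succ]; ring
    · refine Finset.mem_union_right _ (Finset.mem_image.2 ⟨((0:ℤ), (2:ℤ)^m), h2, ?_⟩)
      simp [sh2]; rw [pow_succ]; ring

section Facts
variable (m : ℕ)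

lemma int01 : ∀ x, x ∈ sierpVerts (m+1) → x ∈ (sierpVerts (m+1)).image (sh1 m) →
    x = ((2:ℤ)^m, (0:ℤ)) := by
  intro x hx hx1
  obtain ⟨hx1', hx2', hxs⟩ := verts_bound m x hx
  obtain ⟨q, hq, rfl⟩ := Finset.mem_image.1 hx1
  obtain ⟨hq1, hq2, hqs⟩ := verts_bound m q hq
  simp only [sh1, Prod.mk.injEq] at *
  constructor <;> linarith

lemma int02 : ∀ x, x ∈ sierpVerts (m+1) → x ∈ (sierpVerts (m+1)).image (sh2 m) →
    x = ((0:ℤ), (2:ℤ)^m) := by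
  intro x hx hx1
  obtain ⟨hx1', hx2', hxs⟩ := verts_bound m x hx
  obtain ⟨q, hq, rfl⟩ := Finset.mem_image.1 hx1
  obtain ⟨hq1, hq2, hqs⟩ := verts_bound m q hq
  simp only [sh2, Prod.mk.injEq] at *
  constructor <;> linarith

lemma int12 : ∀ x, x ∈ (sierpVerts (m+1)).image (sh1 m) →
    x ∈ (sierpVerts (m+1)).image (sh2 m) → x = ((2:ℤ)^m, (2:ℤ)^m) := by
  intro x hx1 hx2
  obtain ⟨q, hq, rfl⟩ := Finset.mem_image.1 hx1
  obtain ⟨r, hr, hrx⟩ := Finset.mem_image.1 hx2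
  obtain ⟨hq1, hq2, hqs⟩ := verts_bound m q hq
  obtain ⟨hr1, hr2, hrs⟩ := verts_bound m r hr
  simp only [sh1, sh2, Prod.mk.injEq] at *
  obtain ⟨h1, h2⟩ := hrx
  constructor <;> linarith

lemma notmemV1 (x : ℤ × ℤ) (hx : x.1 < 2^m) : x ∉ (sierpVerts (m+1)).image (sh1 m) := by
  intro h
  obtain ⟨q, hq, rfl⟩ := Finset.mem_image.1 h
  obtain ⟨hq1, -, -⟩ := verts_bound m q hq
  simp only [sh1] at hx
  linarith

lemma notmemV2 (x : ℤ × ℤ) (hx : x.2 < 2^m) : x ∉ (sierpVerts (m+1)).image (sh2 m) := by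
  intro h
  obtain ⟨q, hq, rfl⟩ := Finset.mem_image.1 h
  obtain ⟨-, hq2, -⟩ := verts_bound m q hq
  simp only [sh2] at hx
  linarith

lemma notmemV (x : ℤ × ℤ) (hx : (2:ℤ)^m < x.1 + x.2) : x ∉ sierpVerts (m+1) := by
  intro h
  obtain ⟨-, -, hs⟩ := verts_bound m x h
  linarith

end Facts

def Pieces (n : ℕ) : Prop :=
  (∃ l, GP (n+1) (0,0) (2^n, 0) (sierpVerts (n+1)) l) ∧
  (∃ l, GP (n+1) (0,0) (0, 2^n) (sierpVerts (n+1)) l) ∧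
  (∃ l, GP (n+1) (2^n, 0) (0, 2^n) (sierpVerts (n+1)) l) ∧
  (∃ l, GP (n+1) (0,0) (2^n, 0) ((sierpVerts (n+1)).erase (0, 2^n)) l) ∧
  (∃ l, GP (n+1) (0,0) (0, 2^n) ((sierpVerts (n+1)).erase (2^n, 0)) l) ∧
  (∃ l, GP (n+1) (2^n, 0) (0, 2^n) ((sierpVerts (n+1)).erase (0,0)) l)

lemma pieces_one : Pieces 0 := by
  refine ⟨⟨[(0,0),(0,1),(1,0)], ?_⟩, ⟨[(0,0),(1,0),(0,1)], ?_⟩, ⟨[(1,0),(0,0),(0,1)], ?_⟩,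
    ⟨[(0,0),(1,0)], ?_⟩, ⟨[(0,0),(0,1)], ?_⟩, ⟨[(1,0),(0,1)], ?_⟩⟩ <;>
    · refine ⟨?_, ?_, ?_, ?_, ?_, ?_⟩ <;>
      simp [GP, E, sierpVerts, sierpEdges, List.isChain_cons_cons, Prod.ext_iff] <;> omega

set_option maxHeartbeats 1000000 in
lemma pieces_step (m : ℕ) (ih : Pieces m) : Pieces (m + 1) := by
  obtain ⟨⟨fab, hFab⟩, ⟨fac, hFac⟩, ⟨fbc, hFbc⟩, ⟨mab, hMab⟩, ⟨mac, hMac⟩, ⟨mbc, hMbc⟩⟩ := ih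
  set V := sierpVerts (m + 1) with hV
  set V1 := V.image (sh1 m) with hV1
  set V2 := V.image (sh2 m) with hV2
  have e1 : sh1 m ((0:ℤ), (0:ℤ)) = ((2:ℤ)^m, 0) := by simp [sh1]
  have e2 : sh1 m (((2:ℤ)^m), (0:ℤ)) = ((2:ℤ)^(m+1), 0) := 
    Prod.ext (by simp only [sh1]; ring) rfl
  have e3 : sh1 m ((0:ℤ), ((2:ℤ)^m)) = ((2:ℤ)^m, (2:ℤ)^m) := by simp [sh1]
  have e4 : sh2 m ((0:ℤ), (0:ℤ)) = ((0:ℤ), (2:ℤ)^m) := by simp [sh2]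
  have e5 : sh2 m (((2:ℤ)^m), (0:ℤ)) = ((2:ℤ)^m, (2:ℤ)^m) := by simp [sh2]
  have e6 : sh2 m ((0:ℤ), ((2:ℤ)^m)) = ((0:ℤ), (2:ℤ)^(m+1)) := 
    Prod.ext rfl (by simp only [sh2]; ring)
  have hpow : (0:ℤ) < 2^m := by positivity
  have hpow2 : (2:ℤ)^m < 2^(m+1) := by rw [pow_succ]; nlinarith
  obtain ⟨ha0, hb0, hc0⟩ := corner_mem m
  have hs12V1 : ((2:ℤ)^m, (2:ℤ)^m) ∈ V1 := e3 ▸ Finset.mem_image_of_mem _ hc0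
  have hs12V2 : ((2:ℤ)^m, (2:ℤ)^m) ∈ V2 := e5 ▸ Finset.mem_image_of_mem _ hb0
  have hB0nV : ((2:ℤ)^(m+1), (0:ℤ)) ∉ V := notmemV m _ (by simpa using hpow2)
  have hB0nV2 : ((2:ℤ)^(m+1), (0:ℤ)) ∉ V2 := notmemV2 m _ (by simpa using hpow)
  have hC0nV : ((0:ℤ), (2:ℤ)^(m+1)) ∉ V := notmemV m _ (by simpa using hpow2)
  have hC0nV1 : ((0:ℤ), (2:ℤ)^(m+1)) ∉ V1 := notmemV1 m _ (by simpa using hpow)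
  have ha0nV1 : ((0:ℤ), (0:ℤ)) ∉ V1 := notmemV1 m _ (by simpa using hpow)
  have ha0nV2 : ((0:ℤ), (0:ℤ)) ∉ V2 := notmemV2 m _ (by simpa using hpow)
  -- junction conditions
  have j01 : ∀ x, x ∈ V → x ∈ V1 → x = ((2:ℤ)^m, 0) := int01 m
  have j02 : ∀ x, x ∈ V → x ∈ V2 → x = ((0:ℤ), (2:ℤ)^m) := int02 m
  have j12 : ∀ x, x ∈ V1 → x ∈ V2 → x = ((2:ℤ)^m, (2:ℤ)^m) := int12 m
  -- lifted pieces
  have LFab := hFab.lift0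
  have LFac := hFac.lift0
  have LFbc := hFbc.lift0
  have LMab := hMab.lift0
  have LMbc := hMbc.lift0
  have S1Fab := hFab.lift1; rw [e1, e2] at S1Fab
  have S1Fac := hFac.lift1; rw [e1, e3] at S1Fac
  have S1FabR := hFab.reverse.lift1; rw [e1, e2] at S1FabR
  have S1Mac := hMac.lift1; rw [e1, e3, Finset.image_erase (sh1_inj m), e2] at S1Mac
  have S1MbcR := hMbc.reverse.lift1
  rw [e3, e2, Finset.image_erase (sh1_inj m), e1] at S1MbcR
  have S2Fab := hFab.lift2; rw [e4, e5] at S2Fab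
  have S2Mab := hMab.lift2; rw [e4, e5, Finset.image_erase (sh2_inj m), e6] at S2Mab
  have S2Mbc := hMbc.lift2; rw [e5, e6, Finset.image_erase (sh2_inj m), e4] at S2Mbc
  have S2Mac := hMac.lift2; rw [e4, e6, Finset.image_erase (sh2_inj m), e5] at S2Mac
  refine ⟨?_, ?_, ?_, ?_, ?_, ?_⟩
  · -- Full A B
    have g12 := LFac.append S2Fab (fun x hx hx2 => j02 x hx hx2)
    have g := g12.append S1MbcR (fun x hx hx1 => by
      obtain ⟨hne, hx1⟩ := Finset.mem_erase.1 hx1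
      rcases Finset.mem_union.1 hx with h | h
      · exact absurd (j01 x h hx1) hne
      · exact j12 x hx1 h)
    refine ⟨_, g.congr ?_⟩
    rw [verts_succ]
    ext p
    simp only [Finset.mem_union, Finset.mem_erase, ← hV, ← hV1, ← hV2]
    constructor
    · rintro ((h | h) | ⟨hne, h⟩) <;> tauto
    · rintro ((h | h) | h)
      · tauto
      · by_cases hpb : p = ((2:ℤ)^m, 0)
        · exact Or.inl (Or.inl (hpb ▸ hb0))
        · tauto
      · tauto
  · -- Full A C
    have g12 := LFab.append S1Fac (fun x hx hx1 => j01 x hx hx1)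
    have g := g12.append S2Mbc (fun x hx hx2 => by
      obtain ⟨hne, hx2⟩ := Finset.mem_erase.1 hx2
      rcases Finset.mem_union.1 hx with h | h
      · exact absurd (j02 x h hx2) hne
      · exact j12 x h hx2)
    refine ⟨_, g.congr ?_⟩
    rw [verts_succ]
    ext p
    simp only [Finset.mem_union, Finset.mem_erase, ← hV, ← hV1, ← hV2]
    constructor
    · rintro ((h | h) | ⟨hne, h⟩) <;> tauto
    · rintro ((h | h) | h)
      · tauto
      · tauto
      · by_cases hpc : p = ((0:ℤ), (2:ℤ)^m)
        · exact Or.inl (Or.inl (hpc ▸ hc0))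
        · tauto
  · -- Full B C
    have g12 := S1FabR.append LFbc (fun x hx1 hx => (j01 x hx hx1))
    have g := g12.append S2Mac (fun x hx hx2 => by
      obtain ⟨hne, hx2⟩ := Finset.mem_erase.1 hx2
      rcases Finset.mem_union.1 hx with h | h
      · exact absurd (j12 x h hx2) hne
      · exact j02 x h hx2)
    refine ⟨_, g.congr ?_⟩
    rw [verts_succ]
    ext p
    simp only [Finset.mem_union, Finset.mem_erase, ← hV, ← hV1, ← hV2]
    constructor
    · rintro ((h | h) | ⟨hne, h⟩) <;> tauto
    · rintro ((h | h) | h)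
      · tauto
      · tauto
      · by_cases hps : p = ((2:ℤ)^m, (2:ℤ)^m)
        · exact Or.inl (Or.inl (hps ▸ hs12V1))
        · tauto
  · -- Miss A B ; C
    have g12 := LFac.append S2Mab (fun x hx hx2 =>
      j02 x hx (Finset.mem_of_mem_erase hx2))
    have g := g12.append S1MbcR (fun x hx hx1 => by
      obtain ⟨hne, hx1⟩ := Finset.mem_erase.1 hx1
      rcases Finset.mem_union.1 hx with h | h
      · exact absurd (j01 x h hx1) hne
      · exact j12 x hx1 (Finset.mem_of_mem_erase h))
    refine ⟨_, g.congr ?_⟩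
    rw [verts_succ]
    ext p
    simp only [Finset.mem_union, Finset.mem_erase, ← hV, ← hV1, ← hV2]
    constructor
    · rintro ((h | ⟨hne, h⟩) | ⟨hne, h⟩)
      · exact ⟨fun hp => hC0nV (hp ▸ h), Or.inl (Or.inl h)⟩
      · exact ⟨hne, Or.inr h⟩
      · exact ⟨fun hp => hC0nV1 (hp ▸ h), Or.inl (Or.inr h)⟩
    · rintro ⟨hne, (h | h) | h⟩
      · exact Or.inl (Or.inl h)
      · by_cases hpb : p = ((2:ℤ)^m, 0)
        · exact Or.inl (Or.inl (hpb ▸ hb0))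
        · exact Or.inr ⟨hpb, h⟩
      · exact Or.inl (Or.inr ⟨hne, h⟩)
  · -- Miss A C ; B
    have g12 := LFab.append S1Mac (fun x hx hx1 =>
      j01 x hx (Finset.mem_of_mem_erase hx1))
    have g := g12.append S2Mbc (fun x hx hx2 => by
      obtain ⟨hne, hx2⟩ := Finset.mem_erase.1 hx2
      rcases Finset.mem_union.1 hx with h | h
      · exact absurd (j02 x h hx2) hne
      · exact j12 x (Finset.mem_of_mem_erase h) hx2)
    refine ⟨_, g.congr ?_⟩
    rw [verts_succ]
    ext p
    simp only [Finset.mem_union, Finset.mem_erase, ← hV, ← hV1, ← hV2]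
    constructor
    · rintro ((h | ⟨hne, h⟩) | ⟨hne, h⟩)
      · exact ⟨fun hp => hB0nV (hp ▸ h), Or.inl (Or.inl h)⟩
      · exact ⟨hne, Or.inl (Or.inr h)⟩
      · exact ⟨fun hp => hB0nV2 (hp ▸ h), Or.inr h⟩
    · rintro ⟨hne, (h | h) | h⟩
      · exact Or.inl (Or.inl h)
      · exact Or.inl (Or.inr ⟨hne, h⟩)
      · by_cases hpc : p = ((0:ℤ), (2:ℤ)^m)
        · exact Or.inl (Or.inl (hpc ▸ hc0))
        · exact Or.inr ⟨hpc, h⟩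
  · -- Miss B C ; A
    have g12 := S1FabR.append LMbc (fun x hx1 hx =>
      j01 x (Finset.mem_of_mem_erase hx) hx1)
    have g := g12.append S2Mac (fun x hx hx2 => by
      obtain ⟨hne, hx2⟩ := Finset.mem_erase.1 hx2
      rcases Finset.mem_union.1 hx with h | h
      · exact absurd (j12 x h hx2) hne
      · exact j02 x (Finset.mem_of_mem_erase h) hx2)
    refine ⟨_, g.congr ?_⟩
    rw [verts_succ]
    ext p
    simp only [Finset.mem_union, Finset.mem_erase, ← hV, ← hV1, ← hV2]
    constructor
    · rintro ((h | ⟨hne, h⟩) | ⟨hne, h⟩)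
      · exact ⟨fun hp => ha0nV1 (hp ▸ h), Or.inl (Or.inr h)⟩
      · exact ⟨hne, Or.inl (Or.inl h)⟩
      · exact ⟨fun hp => ha0nV2 (hp ▸ h), Or.inr h⟩
    · rintro ⟨hne, (h | h) | h⟩
      · exact Or.inl (Or.inr ⟨hne, h⟩)
      · exact Or.inl (Or.inl h)
      · by_cases hps : p = ((2:ℤ)^m, (2:ℤ)^m)
        · exact Or.inl (Or.inl (hps ▸ hs12V1))
        · exact Or.inr ⟨hps, h⟩

lemma pieces : ∀ n, Pieces n := fun n => Nat.rec pieces_one (fun m ih => pieces_step m ih) n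

def CGP (n : ℕ) (a : ℤ × ℤ) (l : List (ℤ × ℤ)) : Prop :=
  l.IsChain (E n) ∧ l.head? = some a ∧ l.getLast? = some a ∧ l.tail.Nodup ∧
  (∀ p ∈ l, p ∈ sierpVerts n) ∧ (∀ p ∈ sierpVerts n, p ∈ l.tail) ∧ 4 ≤ l.length

lemma GP.close {n a s S₁ S₂ l₁ l₂} (h₁ : GP n a s S₁ l₁) (h₂ : GP n s a S₂ l₂)
    (hint : ∀ x, x ∈ S₁ → x ∈ S₂ → x = a ∨ x = s) (has : a ≠ s)
    (hS : S₁ ∪ S₂ = sierpVerts n)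
    (hx : ∃ x ∈ S₂, x ≠ a ∧ x ≠ s) :
    CGP n a (l₁ ++ l₂.tail) := by
  obtain ⟨hc1, hn1, hh1, hl1, hm1, hm1'⟩ := h₁
  obtain ⟨hc2, hn2, hh2, hl2, hm2, hm2'⟩ := h₂
  obtain ⟨t₁, rfl⟩ : ∃ t, l₁ = a :: t := by
    cases l₁ with
    | nil => simp at hh1
    | cons x t => simp only [List.head?_cons, Option.some.injEq] at hh1; exact ⟨t, by rw [hh1]⟩
  obtain ⟨t₂, rfl⟩ : ∃ t, l₂ = s :: t := by
    cases l₂ with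
    | nil => simp at hh2
    | cons x t => simp only [List.head?_cons, Option.some.injEq] at hh2; exact ⟨t, by rw [hh2]⟩
  have hsl1 : s ∈ a :: t₁ := by
    obtain ⟨h, rfl⟩ := List.mem_getLast?_eq_getLast (show s ∈ (a :: t₁).getLast? from hl1)
    exact List.getLast_mem h
  have hal2 : a ∈ s :: t₂ := by
    obtain ⟨h, rfl⟩ := List.mem_getLast?_eq_getLast (show a ∈ (s :: t₂).getLast? from hl2)
    exact List.getLast_mem h
  have hst1 : s ∈ t₁ := by
    rcases List.mem_cons.1 hsl1 with h | h
    · exact absurd h.symm has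
    · exact h
  have hat2 : a ∈ t₂ := by
    rcases List.mem_cons.1 hal2 with h | h
    · exact absurd h has
    · exact h
  have hant1 : a ∉ t₁ := (List.nodup_cons.1 hn1).1
  have hsnt2 : s ∉ t₂ := (List.nodup_cons.1 hn2).1
  have htm1 : ∀ p ∈ t₁, p ∈ S₁ := fun p hp => hm1 p (List.mem_cons_of_mem _ hp)
  have htm2 : ∀ p ∈ t₂, p ∈ S₂ := fun p hp => hm2 p (List.mem_cons_of_mem _ hp)
  obtain ⟨x, hxS, hxa, hxs⟩ := hx
  have hxt2 : x ∈ t₂ := by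
    rcases List.mem_cons.1 (hm2' x hxS) with h | h
    · exact absurd h hxs
    · exact h
  have ht2len : 2 ≤ t₂.length := by
    rcases t₂ with - | ⟨y, t⟩
    · simp at hat2
    · rcases t with - | ⟨z, t'⟩
      · simp only [List.mem_singleton] at hat2 hxt2
        exact absurd (hxt2.trans hat2.symm) hxa
      · simp
  refine ⟨?_, ?_, ?_, ?_, ?_, ?_, ?_⟩
  · -- chain
    rw [List.isChain_cons] at hc2
    refine List.IsChain.append hc1 hc2.2 ?_
    intro u hu y hy
    rw [hl1] at hu
    cases hu
    exact hc2.1 y hy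
  · rw [List.head?_append_of_ne_nil _ (by simp)]; exact hh1
  · rw [List.getLast?_append_of_ne_nil _ (by rcases t₂ with - | _ <;> simp_all)]
    simp only [List.tail_cons]
    rcases t₂ with - | ⟨y, t⟩
    · simp at hat2
    · simpa using hl2
  · -- tail nodup
    simp only [List.cons_append, List.tail_cons]
    rw [List.nodup_append]
    refine ⟨(List.nodup_cons.1 hn1).2, List.Nodup.of_cons hn2, ?_⟩
    intro u hu1 v hu2 huv
    subst huv
    rcases hint u (htm1 u hu1) (htm2 u hu2) with rfl | rfl
    · exact hant1 hu1
    · exact hsnt2 hu2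
  · intro p hp
    rw [← hS]
    rcases List.mem_append.1 hp with h | h
    · exact Finset.mem_union_left _ (hm1 p h)
    · exact Finset.mem_union_right _ (htm2 p (by simpa using h))
  · intro p hp
    rw [← hS] at hp
    simp only [List.cons_append, List.tail_cons]
    rcases Finset.mem_union.1 hp with h | h
    · rcases List.mem_cons.1 (hm1' p h) with rfl | h'
      · exact List.mem_append_right _ hat2
      · exact List.mem_append_left _ h'
    · rcases List.mem_cons.1 (hm2' p h) with rfl | h'
      · exact List.mem_append_left _ hst1
      · exact List.mem_append_right _ h'
  · -- length
    rw [List.length_append]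
    have h1 : 2 ≤ (a :: t₁).length := by
      rcases t₁ with - | _
      · simp at hst1
      · simp
    simp only [List.tail_cons]
    omega

lemma cycle_exists : ∀ n, ∃ a l, CGP (n + 1) a l := by
  intro n
  rcases n with - | m
  · refine ⟨(0,0), [(0,0),(1,0),(0,1),(0,0)], ?_, ?_, ?_, ?_, ?_, ?_, ?_⟩ <;>
      simp [CGP, E, sierpVerts, sierpEdges, List.isChain_cons_cons, Prod.ext_iff] <;> omega
  · obtain ⟨⟨fab, hFab⟩, ⟨fac, hFac⟩, ⟨fbc, hFbc⟩, -, -, -⟩ := pieces m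
    set V := sierpVerts (m + 1) with hV
    set V1 := V.image (sh1 m) with hV1
    set V2 := V.image (sh2 m) with hV2
    have e1 : sh1 m ((0:ℤ), (0:ℤ)) = ((2:ℤ)^m, 0) := by simp [sh1]
    have e2 : sh1 m (((2:ℤ)^m), (0:ℤ)) = ((2:ℤ)^(m+1), 0) := 
      Prod.ext (by simp only [sh1]; ring) rfl
    have e3 : sh1 m ((0:ℤ), ((2:ℤ)^m)) = ((2:ℤ)^m, (2:ℤ)^m) := by simp [sh1]
    have e4 : sh2 m ((0:ℤ), (0:ℤ)) = ((0:ℤ), (2:ℤ)^m) := by simp [sh2]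
    have e5 : sh2 m (((2:ℤ)^m), (0:ℤ)) = ((2:ℤ)^m, (2:ℤ)^m) := by simp [sh2]
    have hpow : (0:ℤ) < 2^m := by positivity
    have hpow2 : (2:ℤ)^m < 2^(m+1) := by rw [pow_succ]; nlinarith
    obtain ⟨ha0, hb0, hc0⟩ := corner_mem m
    have F0 := hFbc.lift0
    have F2 := hFab.lift2; rw [e4, e5] at F2
    have F1 := hFac.reverse.lift1; rw [e3, e1] at F1
    have M := F0.append F2 (fun x hx hx2 => int02 m x hx hx2)
    refine ⟨_, _, M.close F1 (fun x hx hx1 => ?_) ?_ ?_ ?_⟩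
    · rcases Finset.mem_union.1 hx with h | h
      · exact Or.inl (int01 m x h hx1)
      · exact Or.inr ((int12 m x hx1 h).symm ▸ rfl)
    · intro h
      have := congrArg Prod.snd h
      simp only at this
      exact absurd this.symm (by simpa using hpow.ne')
    · rw [verts_succ]
      ext p
      simp only [Finset.mem_union, ← hV, ← hV1, ← hV2]
      tauto
    · refine ⟨((2:ℤ)^(m+1), 0), e2 ▸ Finset.mem_image_of_mem _ hb0, ?_, ?_⟩
      · intro h
        have := congrArg Prod.fst h
        simp only at this
        exact absurd this (by nlinarith)
      · intro h
        have := congrArg Prod.snd h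
        simp only at this
        exact absurd this.symm (by simpa using hpow.ne')

section Walks
open SimpleGraph

lemma edge_ne : ∀ n, ∀ p ∈ sierpEdges n, p.1 ≠ p.2
  | 0 => by simp [sierpEdges]
  | 1 => by
      intro p hp
      simp only [sierpEdges, Finset.mem_insert, Finset.mem_singleton] at hp
      rcases hp with rfl | rfl | rfl <;> simp [Prod.ext_iff]
  | (n+2) => by
      intro p hp
      rw [edges_succ] at hp
      rcases Finset.mem_union.1 hp with hp | hp
      · rcases Finset.mem_union.1 hp with hp | hp
        · exact edge_ne (n+1) p hp
        · obtain ⟨e, he, rfl⟩ := Finset.mem_image.1 hp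
          intro hcontra
          apply edge_ne (n+1) e he
          have h1 := congrArg Prod.fst hcontra
          have h2 := congrArg Prod.snd hcontra
          dsimp only at h1 h2
          exact Prod.ext (by linarith) h2
      · obtain ⟨e, he, rfl⟩ := Finset.mem_image.1 hp
        intro hcontra
        apply edge_ne (n+1) e he
        have h1 := congrArg Prod.fst hcontra
        have h2 := congrArg Prod.snd hcontra
        dsimp only at h1 h2
        exact Prod.ext h1 (by linarith)

lemma E_ne {n u v} (h : E n u v) : u ≠ v := by
  rcases h with h | h
  · exact edge_ne n (u, v) h
  · exact (edge_ne n (v, u) h).symm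

variable {α : Type*} {G : SimpleGraph α}

def walkOfChain' : ∀ (a : α) (l : List α), List.IsChain G.Adj (a :: l) → G.Walk a (l.getLastD a)
  | _, [], _ => Walk.nil
  | _, b :: l, h =>
      (Walk.cons (List.isChain_cons_cons.1 h).1
        (walkOfChain' b l (List.isChain_cons_cons.1 h).2)).copy rfl List.getLastD_cons.symm

lemma walkOfChain'_support : ∀ (a : α) (l : List α) (h : List.IsChain G.Adj (a :: l)),
    (walkOfChain' a l h).support = a :: l
  | _, [], _ => rfl
  | _, b :: l, h => by
      rw [walkOfChain', Walk.support_copy, Walk.support_cons, walkOfChain'_support]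

lemma walkOfChain'_length : ∀ (a : α) (l : List α) (h : List.IsChain G.Adj (a :: l)),
    (walkOfChain' a l h).length = l.length
  | _, [], _ => rfl
  | _, b :: l, h => by
      rw [walkOfChain', Walk.length_copy, Walk.length_cons, walkOfChain'_length, List.length_cons]

lemma edge_len {a : α} : ∀ {b : α} (q : G.Walk b a), q.IsPath → s(a, b) ∈ q.edges →
    q.length = 1
  | b, .nil, _, hm => by simp at hm
  | b, .cons h' q', hp, hm => by
      rw [Walk.edges_cons, List.mem_cons] at hm
      rw [Walk.cons_isPath_iff] at hp
      rcases hm with heq | hm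
      · rcases Sym2.eq_iff.1 heq with ⟨rfl, rfl⟩ | ⟨rfl, -⟩
        · exact absurd (Walk.end_mem_support q') hp.2
        · rw [(Walk.isPath_iff_eq_nil (p := q')).1 hp.1]; rfl
      · exact absurd (Walk.snd_mem_support_of_mem_edges q' hm) hp.2

end Walks

open SimpleGraph

lemma map_val_pmap {P : ℤ × ℤ → Prop} :
    ∀ (l : List (ℤ × ℤ)) (h : ∀ p ∈ l, P p),
      (l.pmap (fun p hp => (⟨p, hp⟩ : Subtype P)) h).map Subtype.val = l := by
  intro l h
  induction l with
  | nil => rfl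
  | cons x xs ih => simp [ih]

lemma map_getLastD {α β : Type*} (f : α → β) :
    ∀ (l : List α) (d : α), (l.map f).getLastD (f d) = f (l.getLastD d)
  | [], _ => rfl
  | b :: l, d => by rw [List.map_cons, List.getLastD_cons, List.getLastD_cons, map_getLastD]

lemma cgp_hamiltonian {n : ℕ} {a : ℤ × ℤ} {l : List (ℤ × ℤ)} (h : CGP n a l) :
    (sierpGraph n).IsHamiltonian := by
  obtain ⟨hc, hh, hl, htn, hmem, hcov, hlen⟩ := h
  intro _
  obtain ⟨b, t, rfl⟩ : ∃ b t, l = a :: b :: t := by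
    rcases l with - | ⟨x, - | ⟨y, t⟩⟩
    · simp at hh
    · simp at hlen
    · simp only [List.head?_cons, Option.some.injEq] at hh
      exact ⟨y, t, by rw [hh]⟩
  have htne : t ≠ [] := by
    rcases t with - | _
    · simp at hlen
    · simp
  -- the lifted list
  set L := (a :: b :: t).pmap (fun p hp => (⟨p, hp⟩ : {p : ℤ × ℤ // p ∈ sierpVerts n})) hmem
    with hL
  have hmapL : L.map Subtype.val = a :: b :: t := map_val_pmap _ hmem
  -- chain of adjacency
  have hcL : L.IsChain (sierpGraph n).Adj := by
    have h1 : L.IsChain (fun u v => E n u.1 v.1) := by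
      rw [← List.isChain_map Subtype.val, hmapL]
      exact hc
    exact h1.imp fun u v huv => ⟨fun he => E_ne huv (congrArg Subtype.val he), huv⟩
  obtain ⟨A, B, T, hLT⟩ : ∃ A B T, L = A :: B :: T := by
    rcases L with - | ⟨A, - | ⟨B, T⟩⟩
    · simp at hmapL
    · apply absurd (congrArg List.length hmapL); simp
    · exact ⟨A, B, T, rfl⟩
  rw [hLT] at hcL hmapL
  simp only [List.map_cons, List.cons.injEq] at hmapL
  obtain ⟨hAval, hBval, hTval⟩ := hmapL
  have hTne : T ≠ [] := by
    intro hT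
    rw [hT] at hTval
    exact htne hTval.symm
  -- endpoint
  have hend : T.getLastD B = A := by
    apply Subtype.val_injective
    rw [← map_getLastD Subtype.val T B, hTval, hBval, hAval]
    rw [List.getLastD_eq_getLast?]
    rcases t with - | ⟨y, t'⟩
    · exact absurd rfl htne
    · have : (a :: b :: y :: t').getLast? = some a := hl
      rw [List.getLast?_cons_cons, List.getLast?_cons_cons] at this
      rw [this]
      rfl
  -- tail nodup & coverage
  have htailval : (B :: T).map Subtype.val = b :: t := by rw [List.map_cons, hBval, hTval]
  have htnL : (B :: T).Nodup := by
    apply List.Nodup.of_map Subtype.val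
    rw [htailval]
    exact htn
  have hcovL : ∀ x : {p : ℤ × ℤ // p ∈ sierpVerts n}, x ∈ B :: T := by
    intro x
    have : x.val ∈ b :: t := hcov x.val x.2
    rw [← htailval] at this
    obtain ⟨y, hy, hyx⟩ := List.mem_map.1 this
    exact (Subtype.val_injective hyx) ▸ hy
  -- build the walk
  have hcq : List.IsChain (sierpGraph n).Adj (B :: T) := (List.isChain_cons_cons.1 hcL).2
  have hAB : (sierpGraph n).Adj A B := (List.isChain_cons_cons.1 hcL).1
  let q : (sierpGraph n).Walk B A := (walkOfChain' B T hcq).copy rfl hend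
  have hqsupp : q.support = B :: T := by
    rw [Walk.support_copy, walkOfChain'_support]
  have hqpath : q.IsPath := by
    rw [Walk.isPath_def, hqsupp]
    exact htnL
  have hqlen : q.length = T.length := by
    rw [Walk.length_copy, walkOfChain'_length]
  refine ⟨A, Walk.cons hAB q, ?_⟩
  rw [SimpleGraph.Walk.isHamiltonianCycle_iff_isCycle_and_support_count_tail_eq_one]
  constructor
  · rw [Walk.cons_isCycle_iff]
    refine ⟨hqpath, fun hmem' => ?_⟩
    have h1 := edge_len q hqpath hmem'
    rw [hqlen] at h1
    have : (a :: b :: t).length = T.length + 2 := by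
      rw [← hTval]
      simp
    omega
  · intro x
    rw [Walk.support_cons, List.tail_cons, hqsupp]
    exact @List.count_eq_one_of_mem _ instBEqOfDecidableEq _ _ _ htnL (hcovL x)

theorem sierp_hamiltonian (n : ℕ) (hn : 1 ≤ n) :
    (sierpGraph n).IsHamiltonian := by
  obtain ⟨m, rfl⟩ : ∃ m, n = m + 1 := ⟨n - 1, (Nat.succ_pred_eq_of_pos hn).symm⟩
  obtain ⟨a, l, h⟩ := cycle_exists m
  exact cgp_hamiltonian h
end

section
/- The Sierpiński gasket graph S_n is pancyclic for every n ≥ 1: for every integer ℓ with 3 ≤ ℓ ≤ |V(S_n)|, S_n contains a cycle of length exactly ℓ. -/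
namespace Sierp

/-- coordinate bounds -/
lemma bound : ∀ n, ∀ p ∈ sierpVerts (n + 1), 0 ≤ p.1 ∧ 0 ≤ p.2 ∧ p.1 + p.2 ≤ 2 ^ n := by
  intro n
  induction n with
  | zero => decide
  | succ m ih =>
    intro p hp
    have h2 : (0:ℤ) < 2 ^ m := by positivity
    rw [show m + 1 + 1 = m + 2 from rfl, sierpVerts] at hp
    simp only [Finset.mem_union, Finset.mem_image] at hp
    rcases hp with (hp | ⟨q, hq, rfl⟩) | ⟨q, hq, rfl⟩
    · obtain ⟨h1, h2', h3⟩ := ih p hp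
      refine ⟨h1, h2', h3.trans ?_⟩
      rw [pow_succ]; nlinarith
    · obtain ⟨h1, h2', h3⟩ := ih q hq
      refine ⟨by simpa using add_nonneg h1 h2.le, h2', ?_⟩
      simp only []
      rw [pow_succ]; nlinarith
    · obtain ⟨h1, h2', h3⟩ := ih q hq
      refine ⟨h1, by simpa using add_nonneg h2' h2.le, ?_⟩
      simp only []
      rw [pow_succ]; nlinarith

lemma memA : ∀ n, ((0, 0) : ℤ × ℤ) ∈ sierpVerts (n + 1) := by
  intro n
  induction n with
  | zero => decide
  | succ m ih =>
    rw [show m + 1 + 1 = m + 2 from rfl, sierpVerts]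
    simp only [Finset.mem_union]
    exact Or.inl (Or.inl ih)

lemma memB : ∀ n, ((2 ^ n, 0) : ℤ × ℤ) ∈ sierpVerts (n + 1) := by
  intro n
  induction n with
  | zero => decide
  | succ m ih =>
    rw [show m + 1 + 1 = m + 2 from rfl, sierpVerts]
    simp only [Finset.mem_union, Finset.mem_image]
    refine Or.inl (Or.inr ⟨(2 ^ m, 0), ih, ?_⟩)
    simp [pow_succ]; ring

lemma memC : ∀ n, ((0, 2 ^ n) : ℤ × ℤ) ∈ sierpVerts (n + 1) := by
  intro n
  induction n with
  | zero => decide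
  | succ m ih =>
    rw [show m + 1 + 1 = m + 2 from rfl, sierpVerts]
    simp only [Finset.mem_union, Finset.mem_image]
    refine Or.inr ⟨(0, 2 ^ m), ih, ?_⟩
    simp [pow_succ]; ring

end Sierp

namespace Sierp

lemma verts_sub (n : ℕ) : sierpVerts (n + 1) ⊆ sierpVerts (n + 2) := by
  rw [sierpVerts]
  intro x hx
  simp only [Finset.mem_union]
  exact Or.inl (Or.inl hx)

lemma verts_x (n : ℕ) {p : ℤ × ℤ} (hp : p ∈ sierpVerts (n + 1)) :
    ((p.1 + 2 ^ n, p.2) : ℤ × ℤ) ∈ sierpVerts (n + 2) := by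
  rw [sierpVerts]
  simp only [Finset.mem_union, Finset.mem_image]
  exact Or.inl (Or.inr ⟨p, hp, rfl⟩)

lemma verts_y (n : ℕ) {p : ℤ × ℤ} (hp : p ∈ sierpVerts (n + 1)) :
    ((p.1, p.2 + 2 ^ n) : ℤ × ℤ) ∈ sierpVerts (n + 2) := by
  rw [sierpVerts]
  simp only [Finset.mem_union, Finset.mem_image]
  exact Or.inr ⟨p, hp, rfl⟩

def f0 (n : ℕ) : sierpGraph (n + 1) →g sierpGraph (n + 2) where
  toFun := fun x => ⟨x.1, verts_sub n x.2⟩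
  map_rel' := by
    rintro x y ⟨hne, he⟩
    refine ⟨fun h => hne (Subtype.ext (congrArg (Subtype.val (p := (· ∈ sierpVerts (n+2)))) h)), ?_⟩
    have sub : sierpEdges (n + 1) ⊆ sierpEdges (n + 2) := by
      rw [sierpEdges]; intro e he'
      simp only [Finset.mem_union]; exact Or.inl (Or.inl he')
    rcases he with h | h
    · exact Or.inl (sub h)
    · exact Or.inr (sub h)

def fx (n : ℕ) : sierpGraph (n + 1) →g sierpGraph (n + 2) where
  toFun := fun x => ⟨(x.1.1 + 2 ^ n, x.1.2), verts_x n x.2⟩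
  map_rel' := by
    rintro x y ⟨hne, he⟩
    constructor
    · intro h
      apply hne
      apply Subtype.ext
      have := Subtype.ext_iff.mp h
      simp only [Prod.mk.injEq] at this
      exact Prod.ext (by omega) this.2
    · have mem : ∀ a b : ℤ × ℤ, (a, b) ∈ sierpEdges (n + 1) →
          (((a.1 + 2 ^ n, a.2), (b.1 + 2 ^ n, b.2)) : (ℤ×ℤ)×(ℤ×ℤ)) ∈ sierpEdges (n + 2) := by
        intro a b h
        rw [sierpEdges]
        simp only [Finset.mem_union, Finset.mem_image]
        exact Or.inl (Or.inr ⟨(a, b), h, rfl⟩)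
      rcases he with h | h
      · exact Or.inl (mem _ _ h)
      · exact Or.inr (mem _ _ h)

def fy (n : ℕ) : sierpGraph (n + 1) →g sierpGraph (n + 2) where
  toFun := fun x => ⟨(x.1.1, x.1.2 + 2 ^ n), verts_y n x.2⟩
  map_rel' := by
    rintro x y ⟨hne, he⟩
    constructor
    · intro h
      apply hne
      apply Subtype.ext
      have := Subtype.ext_iff.mp h
      simp only [Prod.mk.injEq] at this
      exact Prod.ext this.1 (by omega)
    · have mem : ∀ a b : ℤ × ℤ, (a, b) ∈ sierpEdges (n + 1) →
          (((a.1, a.2 + 2 ^ n), (b.1, b.2 + 2 ^ n)) : (ℤ×ℤ)×(ℤ×ℤ)) ∈ sierpEdges (n + 2) := by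
        intro a b h
        rw [sierpEdges]
        simp only [Finset.mem_union, Finset.mem_image]
        exact Or.inr ⟨(a, b), h, rfl⟩
      rcases he with h | h
      · exact Or.inl (mem _ _ h)
      · exact Or.inr (mem _ _ h)

lemma f0_inj (n : ℕ) : Function.Injective (f0 n) := by
  intro a b h
  exact Subtype.ext (congrArg (Subtype.val (p := (· ∈ sierpVerts (n+2)))) h)

lemma fx_inj (n : ℕ) : Function.Injective (fx n) := by
  intro a b h
  have h' : ((a.1.1 + 2 ^ n, a.1.2) : ℤ × ℤ) = (b.1.1 + 2 ^ n, b.1.2) :=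
    congrArg (Subtype.val (p := (· ∈ sierpVerts (n+2)))) h
  rw [Prod.mk.injEq] at h'
  exact Subtype.ext (Prod.ext (by omega) h'.2)

lemma fy_inj (n : ℕ) : Function.Injective (fy n) := by
  intro a b h
  have h' : ((a.1.1, a.1.2 + 2 ^ n) : ℤ × ℤ) = (b.1.1, b.1.2 + 2 ^ n) :=
    congrArg (Subtype.val (p := (· ∈ sierpVerts (n+2)))) h
  rw [Prod.mk.injEq] at h'
  exact Subtype.ext (Prod.ext h'.1 (by omega))

end Sierp

namespace Sierp

lemma glue_LR {n : ℕ} {u q : ℤ × ℤ} (hu : u ∈ sierpVerts (n + 1))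
    (hq : q ∈ sierpVerts (n + 1)) (h : u = (q.1 + 2 ^ n, q.2)) : u = (2 ^ n, 0) := by
  obtain ⟨h1, h2, h3⟩ := bound n u hu
  obtain ⟨h1', h2', h3'⟩ := bound n q hq
  have : u.1 = q.1 + 2 ^ n := by rw [h]
  have : u.2 = q.2 := by rw [h]
  have hp : (0:ℤ) < 2 ^ n := by positivity
  refine Prod.ext ?_ ?_ <;> simp only [] <;> omega

lemma glue_LT {n : ℕ} {u q : ℤ × ℤ} (hu : u ∈ sierpVerts (n + 1))
    (hq : q ∈ sierpVerts (n + 1)) (h : u = (q.1, q.2 + 2 ^ n)) : u = (0, 2 ^ n) := by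
  obtain ⟨h1, h2, h3⟩ := bound n u hu
  obtain ⟨h1', h2', h3'⟩ := bound n q hq
  have : u.1 = q.1 := by rw [h]
  have : u.2 = q.2 + 2 ^ n := by rw [h]
  have hp : (0:ℤ) < 2 ^ n := by positivity
  refine Prod.ext ?_ ?_ <;> simp only [] <;> omega

lemma glue_RT {n : ℕ} {q r : ℤ × ℤ} (hq : q ∈ sierpVerts (n + 1))
    (hr : r ∈ sierpVerts (n + 1)) (h : ((q.1 + 2 ^ n, q.2) : ℤ × ℤ) = (r.1, r.2 + 2 ^ n)) :
    ((q.1 + 2 ^ n, q.2) : ℤ × ℤ) = (2 ^ n, 2 ^ n) := by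
  obtain ⟨h1, h2, h3⟩ := bound n q hq
  obtain ⟨h1', h2', h3'⟩ := bound n r hr
  rw [Prod.mk.injEq] at h ⊢
  have hp : (0:ℤ) < 2 ^ n := by positivity
  omega

lemma inter_LR (n : ℕ) :
    sierpVerts (n + 1) ∩ (sierpVerts (n + 1)).image (fun p => ((p.1 + 2 ^ n, p.2) : ℤ × ℤ)) =
      {((2 ^ n, 0) : ℤ × ℤ)} := by
  ext u
  simp only [Finset.mem_inter, Finset.mem_image, Finset.mem_singleton]
  constructor
  · rintro ⟨hu, q, hq, rfl⟩
    exact glue_LR hu hq rfl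
  · rintro rfl
    exact ⟨memB n, (0, 0), memA n, by simp⟩

lemma inter_LRT (n : ℕ) :
    (sierpVerts (n + 1) ∪ (sierpVerts (n + 1)).image (fun p => ((p.1 + 2 ^ n, p.2) : ℤ × ℤ))) ∩
      (sierpVerts (n + 1)).image (fun p => ((p.1, p.2 + 2 ^ n) : ℤ × ℤ)) =
      {((0, 2 ^ n) : ℤ × ℤ), ((2 ^ n, 2 ^ n) : ℤ × ℤ)} := by
  ext u
  simp only [Finset.mem_inter, Finset.mem_union, Finset.mem_image, Finset.mem_insert,
    Finset.mem_singleton]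
  constructor
  · rintro ⟨hu | ⟨q, hq, rfl⟩, r, hr, hru⟩
    · exact Or.inl (glue_LT hu hr hru.symm)
    · exact Or.inr (glue_RT hq hr hru.symm)
  · rintro (rfl | rfl)
    · exact ⟨Or.inl (memC n), (0, 0), memA n, by simp⟩
    · exact ⟨Or.inr ⟨(0, 2 ^ n), memC n, by simp⟩, (2 ^ n, 0), memB n, by simp⟩

lemma card_step (n : ℕ) :
    (sierpVerts (n + 2)).card + 3 = 3 * (sierpVerts (n + 1)).card := by
  have hxinj : Set.InjOn (fun p : ℤ × ℤ => ((p.1 + 2 ^ n, p.2) : ℤ × ℤ)) (sierpVerts (n + 1)) := by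
    intro a _ b _ h
    rw [Prod.mk.injEq] at h
    exact Prod.ext (by omega) h.2
  have hyinj : Set.InjOn (fun p : ℤ × ℤ => ((p.1, p.2 + 2 ^ n) : ℤ × ℤ)) (sierpVerts (n + 1)) := by
    intro a _ b _ h
    rw [Prod.mk.injEq] at h
    exact Prod.ext h.1 (by omega)
  set L := sierpVerts (n + 1)
  set R := L.image (fun p : ℤ × ℤ => ((p.1 + 2 ^ n, p.2) : ℤ × ℤ)) with hR
  set T := L.image (fun p : ℤ × ℤ => ((p.1, p.2 + 2 ^ n) : ℤ × ℤ)) with hT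
  have hcR : R.card = L.card := Finset.card_image_of_injOn hxinj
  have hcT : T.card = L.card := Finset.card_image_of_injOn hyinj
  have h1 : (L ∪ R).card + (L ∩ R).card = L.card + R.card := Finset.card_union_add_card_inter _ _
  have h2 : ((L ∪ R) ∪ T).card + ((L ∪ R) ∩ T).card = (L ∪ R).card + T.card :=
    Finset.card_union_add_card_inter _ _
  rw [inter_LR n] at h1
  rw [inter_LRT n] at h2
  have hv : sierpVerts (n + 2) = (L ∪ R) ∪ T := by rw [sierpVerts]
  have hcard2 : ({((0, 2 ^ n) : ℤ × ℤ), ((2 ^ n, 2 ^ n) : ℤ × ℤ)} : Finset (ℤ × ℤ)).card = 2 := by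
    rw [Finset.card_insert_of_notMem (by simp; positivity), Finset.card_singleton]
  rw [hv]
  simp only [Finset.card_singleton] at h1
  rw [hcard2] at h2
  omega

lemma card1 : (sierpVerts 1).card = 3 := by decide

lemma card_ge (n : ℕ) : 2 ^ n + 2 ≤ (sierpVerts (n + 1)).card := by
  induction n with
  | zero => rw [card1]; norm_num
  | succ m ih =>
    have h1 := card_step m
    show 2 ^ (m + 1) + 2 ≤ (sierpVerts (m + 2)).card
    have h2 : 2 ^ (m + 1) = 2 * 2 ^ m := by rw [pow_succ]; ring
    omega

lemma three_s_le (n : ℕ) : 3 * 2 ^ n ≤ (sierpVerts (n + 1)).card + 1 := by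
  induction n with
  | zero => rw [card1]; norm_num
  | succ m ih =>
    have h1 := card_step m
    have h2 := card_ge m
    show 3 * 2 ^ (m + 1) ≤ (sierpVerts (m + 2)).card + 1
    have h3 : 3 * 2 ^ (m + 1) = 2 * (3 * 2 ^ m) := by rw [pow_succ]; ring
    omega

end Sierp

open SimpleGraph Walk

variable {V : Type*} {G : SimpleGraph V}

lemma append_isPath' {x y z : V} {p : G.Walk x y} {q : G.Walk y z}
    (hp : p.IsPath) (hq : q.IsPath)
    (h : ∀ u, u ∈ p.support → u ∈ q.support → u = y) : (p.append q).IsPath := by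
  rw [Walk.isPath_def, Walk.support_append, List.nodup_append]
  refine ⟨hp.support_nodup, ?_, ?_⟩
  · exact (Walk.isPath_def _ |>.mp hq).tail
  · intro u hu w hu' huw
    subst huw
    have hy : u = y := h u hu (List.mem_of_mem_tail hu')
    subst hy
    have hnd : q.support.Nodup := (Walk.isPath_def _).mp hq
    rw [Walk.support_eq_cons] at hnd
    exact (List.nodup_cons.mp hnd).1 hu'

lemma edge_end_length_one {x y : V} {p : G.Walk x y} (hp : p.IsPath)
    (he : s(x, y) ∈ p.edges) : p.length = 1 := by
  cases p with
  | nil => simp at he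
  | cons h q =>
    rename_i a
    rw [Walk.edges_cons, List.mem_cons] at he
    rcases he with he | he
    · rw [Sym2.eq_iff] at he
      have ha : a = y := by
        rcases he with ⟨-, rfl⟩ | ⟨rfl, rfl⟩
        · rfl
        · exact absurd rfl h.ne
      subst ha
      have : q = Walk.nil := Walk.isPath_iff_eq_nil.mp ((Walk.cons_isPath_iff h q).mp hp).1
      subst this; rfl
    · exact absurd (q.fst_mem_support_of_mem_edges he) ((Walk.cons_isPath_iff h q).mp hp).2

lemma append_isCycle' {x y : V} {p : G.Walk x y} {q : G.Walk y x}
    (hp : p.IsPath) (hq : q.IsPath) (hxy : x ≠ y)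
    (h : ∀ u, u ∈ p.support → u ∈ q.support → u = x ∨ u = y)
    (hlen : 3 ≤ p.length + q.length) : (p.append q).IsCycle := by
  rw [Walk.isCycle_def]
  refine ⟨?_, ?_, ?_⟩
  · -- IsTrail
    rw [Walk.isTrail_def, Walk.edges_append, List.nodup_append]
    refine ⟨hp.isTrail.edges_nodup, hq.isTrail.edges_nodup, ?_⟩
    intro e hep e' heq hee
    subst hee
    induction e using Sym2.inductionOn with
    | hf a b =>
      have ha : a = x ∨ a = y :=
        h a (p.fst_mem_support_of_mem_edges hep) (q.fst_mem_support_of_mem_edges heq)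
      have hb : b = x ∨ b = y :=
        h b (p.snd_mem_support_of_mem_edges hep) (q.snd_mem_support_of_mem_edges heq)
      have hab : a ≠ b := (G.ne_of_adj (p.adj_of_mem_edges hep))
      have hexy : s(a, b) = s(x, y) := by
        rcases ha with rfl | rfl <;> rcases hb with rfl | rfl
        · exact absurd rfl hab
        · rfl
        · exact Sym2.eq_swap
        · exact absurd rfl hab
      rw [hexy] at hep heq
      have h1 := edge_end_length_one hp hep
      have h2 := edge_end_length_one hq.reverse (by rwa [Walk.edges_reverse, List.mem_reverse])
      rw [Walk.length_reverse] at h2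
      omega
  · -- ≠ nil
    intro hnil
    have := congrArg Walk.length hnil
    rw [Walk.length_append] at this
    simp only [Walk.length_nil] at this
    omega
  · -- tail nodup
    rw [Walk.tail_support_append, List.nodup_append]
    refine ⟨((Walk.isPath_def _).mp hp).tail, ((Walk.isPath_def _).mp hq).tail, ?_⟩
    intro u hu w hu' huw
    subst huw
    rcases h u (List.mem_of_mem_tail hu) (List.mem_of_mem_tail hu') with rfl | rfl
    · have hnd : p.support.Nodup := (Walk.isPath_def _).mp hp
      rw [Walk.support_eq_cons] at hnd
      exact (List.nodup_cons.mp hnd).1 hu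
    · have hnd : q.support.Nodup := (Walk.isPath_def _).mp hq
      rw [Walk.support_eq_cons] at hnd
      exact (List.nodup_cons.mp hnd).1 hu'

namespace Sierp

def HP (m : ℕ) {x y : ℤ × ℤ} (hx : x ∈ sierpVerts m) (hy : y ∈ sierpVerts m)
    (z : ℤ × ℤ) (ℓ : ℕ) : Prop :=
  ∃ p : (sierpGraph m).Walk ⟨x, hx⟩ ⟨y, hy⟩, p.IsPath ∧ p.length = ℓ ∧
    (ℓ + 2 ≤ (sierpVerts m).card → ∀ u ∈ p.support, u.1 ≠ z)

lemma HP.symm {m : ℕ} {x y : ℤ × ℤ} {hx : x ∈ sierpVerts m} {hy : y ∈ sierpVerts m}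
    {z : ℤ × ℤ} {ℓ : ℕ} (h : HP m hx hy z ℓ) : HP m hy hx z ℓ := by
  obtain ⟨p, hp, hl, ha⟩ := h
  refine ⟨p.reverse, hp.reverse, by simp [hl], fun hc u hu => ?_⟩
  rw [SimpleGraph.Walk.support_reverse, List.mem_reverse] at hu
  exact ha hc u hu

def PP (n : ℕ) : Prop :=
  ∀ ℓ : ℕ, 2 ^ n ≤ ℓ → ℓ + 1 ≤ (sierpVerts (n + 1)).card →
    HP (n + 1) (memA n) (memB n) ((0, 2 ^ n) : ℤ × ℤ) ℓ ∧
    HP (n + 1) (memA n) (memC n) ((2 ^ n, 0) : ℤ × ℤ) ℓ ∧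
    HP (n + 1) (memB n) (memC n) ((0, 0) : ℤ × ℤ) ℓ

def va : {p : ℤ × ℤ // p ∈ sierpVerts 1} := ⟨(0, 0), by decide⟩
def vb : {p : ℤ × ℤ // p ∈ sierpVerts 1} := ⟨(1, 0), by decide⟩
def vc : {p : ℤ × ℤ // p ∈ sierpVerts 1} := ⟨(0, 1), by decide⟩

lemma hab : (sierpGraph 1).Adj va vb := by decide
lemma hac : (sierpGraph 1).Adj va vc := by decide
lemma hbc : (sierpGraph 1).Adj vb vc := by decide

lemma base : PP 0 := by
  intro ℓ h1 h2
  rw [card1] at h2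
  norm_num at h1
  have h2' : ℓ ≤ 2 := by omega
  interval_cases ℓ
  · -- ℓ = 1
    refine ⟨⟨SimpleGraph.Walk.cons hab SimpleGraph.Walk.nil, by rw [SimpleGraph.Walk.isPath_def]; decide, rfl, by decide⟩,
        ⟨SimpleGraph.Walk.cons hac SimpleGraph.Walk.nil, by rw [SimpleGraph.Walk.isPath_def]; decide, rfl, by decide⟩,
        ⟨SimpleGraph.Walk.cons hbc SimpleGraph.Walk.nil, by rw [SimpleGraph.Walk.isPath_def]; decide, rfl, by decide⟩⟩
  · -- ℓ = 2
    refine ⟨⟨SimpleGraph.Walk.cons hac (SimpleGraph.Walk.cons hbc.symm SimpleGraph.Walk.nil),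
        by rw [SimpleGraph.Walk.isPath_def]; decide, rfl, by intro h; norm_num [card1] at h⟩,
        ⟨SimpleGraph.Walk.cons hab (SimpleGraph.Walk.cons hbc SimpleGraph.Walk.nil),
        by rw [SimpleGraph.Walk.isPath_def]; decide, rfl, by intro h; norm_num [card1] at h⟩,
        ⟨SimpleGraph.Walk.cons hab.symm (SimpleGraph.Walk.cons hac SimpleGraph.Walk.nil),
        by rw [SimpleGraph.Walk.isPath_def]; decide, rfl, by intro h; norm_num [card1] at h⟩⟩

end Sierp

namespace Sierp

open SimpleGraph Walk

abbrev SV (m : ℕ) := {p : ℤ × ℤ // p ∈ sierpVerts m}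

lemma mem_support_map {V W : Type*} {G : SimpleGraph V} {H : SimpleGraph W} (f : G →g H)
    {a b : V} (w : G.Walk a b) {u : W} (hu : u ∈ (w.map f).support) :
    ∃ x ∈ w.support, f x = u := by
  rw [SimpleGraph.Walk.support_map] at hu
  exact List.mem_map.mp hu

abbrev vA (n : ℕ) : SV (n + 1) := ⟨(0, 0), memA n⟩
abbrev vB (n : ℕ) : SV (n + 1) := ⟨(2 ^ n, 0), memB n⟩
abbrev vC (n : ℕ) : SV (n + 1) := ⟨(0, 2 ^ n), memC n⟩
abbrev m1 (n : ℕ) : SV (n + 2) := ⟨(2 ^ n, 0), verts_sub n (memB n)⟩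
abbrev m2 (n : ℕ) : SV (n + 2) := ⟨(0, 2 ^ n), verts_sub n (memC n)⟩
abbrev m3 (n : ℕ) : SV (n + 2) := ⟨(2 ^ n, 2 ^ n), by simpa using verts_x n (memC n)⟩

lemma ef0A (n : ℕ) : (f0 n) (vA n) = vA (n + 1) := Subtype.ext rfl
lemma ef0B (n : ℕ) : (f0 n) (vB n) = m1 n := Subtype.ext rfl
lemma ef0C (n : ℕ) : (f0 n) (vC n) = m2 n := Subtype.ext rfl
lemma efxA (n : ℕ) : (fx n) (vA n) = m1 n := by
  apply Subtype.ext
  show ((0 + 2 ^ n : ℤ), (0 : ℤ)) = ((2 ^ n : ℤ), (0 : ℤ))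
  norm_num
lemma efxB (n : ℕ) : (fx n) (vB n) = vB (n + 1) := by
  apply Subtype.ext
  show ((2 ^ n + 2 ^ n : ℤ), (0 : ℤ)) = ((2 ^ (n + 1) : ℤ), (0 : ℤ))
  rw [pow_succ]; norm_num; ring
lemma efxC (n : ℕ) : (fx n) (vC n) = m3 n := by
  apply Subtype.ext
  show ((0 + 2 ^ n : ℤ), (2 ^ n : ℤ)) = ((2 ^ n : ℤ), (2 ^ n : ℤ))
  norm_num
lemma efyA (n : ℕ) : (fy n) (vA n) = m2 n := by
  apply Subtype.ext
  show ((0 : ℤ), (0 + 2 ^ n : ℤ)) = ((0 : ℤ), (2 ^ n : ℤ))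
  norm_num
lemma efyB (n : ℕ) : (fy n) (vB n) = m3 n := by
  apply Subtype.ext
  show ((2 ^ n : ℤ), (0 + 2 ^ n : ℤ)) = ((2 ^ n : ℤ), (2 ^ n : ℤ))
  norm_num
lemma efyC (n : ℕ) : (fy n) (vC n) = vC (n + 1) := by
  apply Subtype.ext
  show ((0 : ℤ), (2 ^ n + 2 ^ n : ℤ)) = ((0 : ℤ), (2 ^ (n + 1) : ℤ))
  rw [pow_succ]; norm_num; ring

lemma pow_pos' (n : ℕ) : (0:ℤ) < 2 ^ n := by positivity

/-- an L-copy vertex differs from the outer B and C corners -/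
lemma avoid_L {n : ℕ} {v : ℤ × ℤ} (h : v ∈ sierpVerts (n + 1)) :
    v ≠ ((2 ^ (n + 1) : ℤ), (0 : ℤ)) ∧ v ≠ ((0 : ℤ), (2 ^ (n + 1) : ℤ)) := by
  obtain ⟨h1, h2, h3⟩ := bound n v h
  have hp := pow_pos' n
  have hps : (2:ℤ) ^ (n + 1) = 2 ^ n + 2 ^ n := by rw [pow_succ]; ring
  constructor <;> intro he <;> rw [Prod.ext_iff] at he <;> omega

lemma avoid_R {n : ℕ} {x : ℤ × ℤ} (h : x ∈ sierpVerts (n + 1)) (y : ℤ) :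
    ((x.1 + 2 ^ n, x.2) : ℤ × ℤ) ≠ ((0 : ℤ), y) := by
  obtain ⟨h1, _, _⟩ := bound n x h
  have hp := pow_pos' n
  intro he
  rw [Prod.ext_iff] at he
  simp only at he
  omega

lemma avoid_T {n : ℕ} {x : ℤ × ℤ} (h : x ∈ sierpVerts (n + 1)) (y : ℤ) :
    ((x.1, x.2 + 2 ^ n) : ℤ × ℤ) ≠ (y, (0 : ℤ)) := by
  obtain ⟨_, h2, _⟩ := bound n x h
  have hp := pow_pos' n
  intro he
  rw [Prod.ext_iff] at he
  simp only at he
  omega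

end Sierp

namespace Sierp

open SimpleGraph Walk

lemma val_eq {m : ℕ} {a b : SV m} (h : a = b) : a.1 = b.1 := congrArg Subtype.val h

lemma step (n : ℕ) (ih : PP n) : PP (n + 1) := by
  have hcs := card_step n
  have hge := card_ge n
  have h3s := three_s_le n
  have hp1 : 1 ≤ 2 ^ n := Nat.one_le_two_pow
  have hpow : (2:ℕ) ^ (n + 1) = 2 ^ n + 2 ^ n := by rw [pow_succ]; ring
  have hceq : (sierpVerts (n + 1 + 1)).card = (sierpVerts (n + 2)).card := rfl
  intro ℓ hs hN'
  rw [hceq] at hN'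
  set N := (sierpVerts (n + 1)).card with hNdef
  by_cases hroute : ℓ ≤ 2 * N - 2
  · -- two-copy routes
    obtain ⟨pl, ql, hsum, hpl1, hpl2, hql1, hql2⟩ :
        ∃ pl ql : ℕ, pl + ql = ℓ ∧ 2 ^ n ≤ pl ∧ pl + 1 ≤ N ∧ 2 ^ n ≤ ql ∧ ql + 1 ≤ N := by
      refine ⟨min (N - 1) (ℓ - 2 ^ n), ℓ - min (N - 1) (ℓ - 2 ^ n), by omega, by omega,
        by omega, by omega, by omega⟩
    refine ⟨?_, ?_, ?_⟩
    · -- pair (A, B): L then R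
      obtain ⟨p₀, hp₀, hplen, _⟩ := (ih pl hpl1 hpl2).1
      obtain ⟨q₀, hq₀, hqlen, _⟩ := (ih ql hql1 hql2).1
      refine ⟨((p₀.map (f0 n)).copy (ef0A n) (ef0B n)).append
              ((q₀.map (fx n)).copy (efxA n) (efxB n)), ?_, ?_, ?_⟩
      · apply append_isPath'
        · rw [Walk.isPath_copy]
          exact Walk.map_isPath_of_injective (f0_inj n) hp₀
        · rw [Walk.isPath_copy]
          exact Walk.map_isPath_of_injective (fx_inj n) hq₀
        · intro u hu hu'
          rw [Walk.support_copy] at hu hu'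
          obtain ⟨x, hx, rfl⟩ := mem_support_map _ _ hu
          obtain ⟨y, hy, hyu⟩ := mem_support_map _ _ hu'
          have h2 : ((f0 n) x).1 = ((y.1.1 + 2 ^ n, y.1.2) : ℤ × ℤ) := (val_eq hyu).symm
          exact Subtype.ext (glue_LR x.2 y.2 h2)
      · rw [Walk.length_append, Walk.length_copy, Walk.length_copy, Walk.length_map,
          Walk.length_map, hplen, hqlen, hsum]
      · intro _ u hu
        rw [Walk.mem_support_append_iff, Walk.support_copy, Walk.support_copy] at hu
        rcases hu with hu | hu
        · obtain ⟨x, _, rfl⟩ := mem_support_map _ _ hu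
          exact (avoid_L x.2).2
        · obtain ⟨y, _, hyu⟩ := mem_support_map _ _ hu
          rw [← val_eq hyu]
          exact avoid_R y.2 _
    · -- pair (A, C): L then T
      obtain ⟨p₀, hp₀, hplen, _⟩ := (ih pl hpl1 hpl2).2.1
      obtain ⟨q₀, hq₀, hqlen, _⟩ := (ih ql hql1 hql2).2.1
      refine ⟨((p₀.map (f0 n)).copy (ef0A n) (ef0C n)).append
              ((q₀.map (fy n)).copy (efyA n) (efyC n)), ?_, ?_, ?_⟩
      · apply append_isPath'
        · rw [Walk.isPath_copy]
          exact Walk.map_isPath_of_injective (f0_inj n) hp₀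
        · rw [Walk.isPath_copy]
          exact Walk.map_isPath_of_injective (fy_inj n) hq₀
        · intro u hu hu'
          rw [Walk.support_copy] at hu hu'
          obtain ⟨x, hx, rfl⟩ := mem_support_map _ _ hu
          obtain ⟨y, hy, hyu⟩ := mem_support_map _ _ hu'
          have h2 : ((f0 n) x).1 = ((y.1.1, y.1.2 + 2 ^ n) : ℤ × ℤ) := (val_eq hyu).symm
          exact Subtype.ext (glue_LT x.2 y.2 h2)
      · rw [Walk.length_append, Walk.length_copy, Walk.length_copy, Walk.length_map,
          Walk.length_map, hplen, hqlen, hsum]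
      · intro _ u hu
        rw [Walk.mem_support_append_iff, Walk.support_copy, Walk.support_copy] at hu
        rcases hu with hu | hu
        · obtain ⟨x, _, rfl⟩ := mem_support_map _ _ hu
          exact (avoid_L x.2).1
        · obtain ⟨y, _, hyu⟩ := mem_support_map _ _ hu
          rw [← val_eq hyu]
          exact avoid_T y.2 _
    · -- pair (B, C): R then T
      obtain ⟨p₀, hp₀, hplen, _⟩ := (ih pl hpl1 hpl2).2.2
      obtain ⟨q₀, hq₀, hqlen, _⟩ := (ih ql hql1 hql2).2.2
      refine ⟨((p₀.map (fx n)).copy (efxB n) (efxC n)).append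
              ((q₀.map (fy n)).copy (efyB n) (efyC n)), ?_, ?_, ?_⟩
      · apply append_isPath'
        · rw [Walk.isPath_copy]
          exact Walk.map_isPath_of_injective (fx_inj n) hp₀
        · rw [Walk.isPath_copy]
          exact Walk.map_isPath_of_injective (fy_inj n) hq₀
        · intro u hu hu'
          rw [Walk.support_copy] at hu hu'
          obtain ⟨x, hx, rfl⟩ := mem_support_map _ _ hu
          obtain ⟨y, hy, hyu⟩ := mem_support_map _ _ hu'
          have h2 : (((fx n) x).1 : ℤ × ℤ) = (y.1.1, y.1.2 + 2 ^ n) := (val_eq hyu).symm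
          exact Subtype.ext (glue_RT x.2 y.2 h2)
      · rw [Walk.length_append, Walk.length_copy, Walk.length_copy, Walk.length_map,
          Walk.length_map, hplen, hqlen, hsum]
      · intro _ u hu
        rw [Walk.mem_support_append_iff, Walk.support_copy, Walk.support_copy] at hu
        rcases hu with hu | hu
        · obtain ⟨x, _, hyu⟩ := mem_support_map _ _ hu
          rw [← val_eq hyu]
          exact avoid_R x.2 _
        · obtain ⟨y, _, hyu⟩ := mem_support_map _ _ hu
          rw [← val_eq hyu]
          exact avoid_T y.2 0
  · -- three-copy routes
    obtain ⟨pl, ql, rl, hsum, hpl1, hpl2, hql1, hql2, hqcond, hrl1, hrl2⟩ :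
        ∃ pl ql rl : ℕ, pl + ql + rl = ℓ ∧ 2 ^ n ≤ pl ∧ pl + 2 ≤ N ∧ 2 ^ n ≤ ql ∧
          ql + 1 ≤ N ∧ (ℓ + 2 ≤ 3 * N - 3 → ql + 2 ≤ N) ∧ 2 ^ n ≤ rl ∧ rl + 1 ≤ N := by
      refine ⟨min (N - 2) (ℓ - min (N - 1) (ℓ - 2 * 2 ^ n) - 2 ^ n),
        ℓ - min (N - 1) (ℓ - 2 * 2 ^ n) - min (N - 2) (ℓ - min (N - 1) (ℓ - 2 * 2 ^ n) - 2 ^ n),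
        min (N - 1) (ℓ - 2 * 2 ^ n), by omega, by omega, by omega, by omega, by omega,
        by omega, by omega, by omega⟩
    have hplN : pl + 2 ≤ (sierpVerts (n + 1)).card := by omega
    have hplN' : pl + 1 ≤ N := by omega
    refine ⟨?_, ?_, ?_⟩
    · -- pair (A, B): L (avoid M1) then T then R
      obtain ⟨p₀, hp₀, hplen, hpav⟩ := (ih pl hpl1 hplN').2.1
      obtain ⟨q₀, hq₀, hqlen, hqav⟩ := (ih ql hql1 hql2).1
      obtain ⟨r₀, hr₀, hrlen, _⟩ := ((ih rl hrl1 hrl2).2.2).symm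
      refine ⟨((p₀.map (f0 n)).copy (ef0A n) (ef0C n)).append
              (((q₀.map (fy n)).copy (efyA n) (efyB n)).append
               ((r₀.map (fx n)).copy (efxC n) (efxB n))), ?_, ?_, ?_⟩
      · apply append_isPath'
        · rw [Walk.isPath_copy]
          exact Walk.map_isPath_of_injective (f0_inj n) hp₀
        · apply append_isPath'
          · rw [Walk.isPath_copy]
            exact Walk.map_isPath_of_injective (fy_inj n) hq₀
          · rw [Walk.isPath_copy]
            exact Walk.map_isPath_of_injective (fx_inj n) hr₀
          · intro u hu hu'
            rw [Walk.support_copy] at hu hu'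
            obtain ⟨y, hy, rfl⟩ := mem_support_map _ _ hu
            obtain ⟨x, hx, hxu⟩ := mem_support_map _ _ hu'
            have h2 : ((x.1.1 + 2 ^ n, x.1.2) : ℤ × ℤ) = (y.1.1, y.1.2 + 2 ^ n) := val_eq hxu
            exact Subtype.ext ((val_eq hxu).symm.trans (glue_RT x.2 y.2 h2))
        · intro u hu hu'
          rw [Walk.support_copy] at hu
          rw [Walk.mem_support_append_iff, Walk.support_copy, Walk.support_copy] at hu'
          obtain ⟨x, hx, rfl⟩ := mem_support_map _ _ hu
          rcases hu' with hu' | hu'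
          · obtain ⟨y, _, hyu⟩ := mem_support_map _ _ hu'
            have h2 : ((f0 n) x).1 = ((y.1.1, y.1.2 + 2 ^ n) : ℤ × ℤ) := (val_eq hyu).symm
            exact Subtype.ext (glue_LT x.2 y.2 h2)
          · obtain ⟨y, _, hyu⟩ := mem_support_map _ _ hu'
            have h2 : ((f0 n) x).1 = ((y.1.1 + 2 ^ n, y.1.2) : ℤ × ℤ) := (val_eq hyu).symm
            exact absurd (glue_LR x.2 y.2 h2) (hpav hplN x hx)
      · rw [Walk.length_append, Walk.length_append, Walk.length_copy, Walk.length_copy,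
          Walk.length_copy, Walk.length_map, Walk.length_map, Walk.length_map,
          hplen, hqlen, hrlen]
        omega
      · intro hc u hu
        rw [hceq] at hc
        have hq2 : ql + 2 ≤ (sierpVerts (n + 1)).card := hqcond (by omega)
        rw [Walk.mem_support_append_iff, Walk.mem_support_append_iff, Walk.support_copy,
          Walk.support_copy, Walk.support_copy] at hu
        rcases hu with hu | hu | hu
        · obtain ⟨x, _, rfl⟩ := mem_support_map _ _ hu
          exact (avoid_L x.2).2
        · obtain ⟨y, hy, hyu⟩ := mem_support_map _ _ hu
          rw [← val_eq hyu]
          intro he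
          have he' : ((y.1.1, y.1.2 + 2 ^ n) : ℤ × ℤ) = ((0 : ℤ), (2 ^ (n + 1) : ℤ)) := he
          rw [Prod.mk.injEq] at he'
          have hps : (2:ℤ) ^ (n + 1) = 2 ^ n + 2 ^ n := by rw [pow_succ]; ring
          exact hqav hq2 y hy (Prod.ext he'.1 (by omega))
        · obtain ⟨y, _, hyu⟩ := mem_support_map _ _ hu
          rw [← val_eq hyu]
          exact avoid_R y.2 _
    · -- pair (A, C): L (avoid M2) then R then T
      obtain ⟨p₀, hp₀, hplen, hpav⟩ := (ih pl hpl1 hplN').1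
      obtain ⟨q₀, hq₀, hqlen, hqav⟩ := (ih ql hql1 hql2).2.1
      obtain ⟨r₀, hr₀, hrlen, _⟩ := (ih rl hrl1 hrl2).2.2
      refine ⟨((p₀.map (f0 n)).copy (ef0A n) (ef0B n)).append
              (((q₀.map (fx n)).copy (efxA n) (efxC n)).append
               ((r₀.map (fy n)).copy (efyB n) (efyC n))), ?_, ?_, ?_⟩
      · apply append_isPath'
        · rw [Walk.isPath_copy]
          exact Walk.map_isPath_of_injective (f0_inj n) hp₀
        · apply append_isPath'
          · rw [Walk.isPath_copy]
            exact Walk.map_isPath_of_injective (fx_inj n) hq₀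
          · rw [Walk.isPath_copy]
            exact Walk.map_isPath_of_injective (fy_inj n) hr₀
          · intro u hu hu'
            rw [Walk.support_copy] at hu hu'
            obtain ⟨y, hy, rfl⟩ := mem_support_map _ _ hu
            obtain ⟨x, hx, hxu⟩ := mem_support_map _ _ hu'
            have h2 : ((y.1.1 + 2 ^ n, y.1.2) : ℤ × ℤ) = (x.1.1, x.1.2 + 2 ^ n) :=
              (val_eq hxu).symm
            exact Subtype.ext (glue_RT y.2 x.2 h2)
        · intro u hu hu'
          rw [Walk.support_copy] at hu
          rw [Walk.mem_support_append_iff, Walk.support_copy, Walk.support_copy] at hu'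
          obtain ⟨x, hx, rfl⟩ := mem_support_map _ _ hu
          rcases hu' with hu' | hu'
          · obtain ⟨y, _, hyu⟩ := mem_support_map _ _ hu'
            have h2 : ((f0 n) x).1 = ((y.1.1 + 2 ^ n, y.1.2) : ℤ × ℤ) := (val_eq hyu).symm
            exact Subtype.ext (glue_LR x.2 y.2 h2)
          · obtain ⟨y, _, hyu⟩ := mem_support_map _ _ hu'
            have h2 : ((f0 n) x).1 = ((y.1.1, y.1.2 + 2 ^ n) : ℤ × ℤ) := (val_eq hyu).symm
            exact absurd (glue_LT x.2 y.2 h2) (hpav hplN x hx)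
      · rw [Walk.length_append, Walk.length_append, Walk.length_copy, Walk.length_copy,
          Walk.length_copy, Walk.length_map, Walk.length_map, Walk.length_map,
          hplen, hqlen, hrlen]
        omega
      · intro hc u hu
        rw [hceq] at hc
        have hq2 : ql + 2 ≤ (sierpVerts (n + 1)).card := hqcond (by omega)
        rw [Walk.mem_support_append_iff, Walk.mem_support_append_iff, Walk.support_copy,
          Walk.support_copy, Walk.support_copy] at hu
        rcases hu with hu | hu | hu
        · obtain ⟨x, _, rfl⟩ := mem_support_map _ _ hu
          exact (avoid_L x.2).1
        · obtain ⟨y, hy, hyu⟩ := mem_support_map _ _ hu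
          rw [← val_eq hyu]
          intro he
          have he' : ((y.1.1 + 2 ^ n, y.1.2) : ℤ × ℤ) = ((2 ^ (n + 1) : ℤ), (0 : ℤ)) := he
          rw [Prod.mk.injEq] at he'
          have hps : (2:ℤ) ^ (n + 1) = 2 ^ n + 2 ^ n := by rw [pow_succ]; ring
          exact hqav hq2 y hy (Prod.ext (by omega) he'.2)
        · obtain ⟨y, _, hyu⟩ := mem_support_map _ _ hu
          rw [← val_eq hyu]
          exact avoid_T y.2 _
    · -- pair (B, C): R (avoid M3) then L then T
      obtain ⟨p₀, hp₀, hplen, hpav⟩ := ((ih pl hpl1 hplN').1).symm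
      obtain ⟨q₀, hq₀, hqlen, hqav⟩ := (ih ql hql1 hql2).2.2
      obtain ⟨r₀, hr₀, hrlen, _⟩ := (ih rl hrl1 hrl2).2.1
      refine ⟨((p₀.map (fx n)).copy (efxB n) (efxA n)).append
              (((q₀.map (f0 n)).copy (ef0B n) (ef0C n)).append
               ((r₀.map (fy n)).copy (efyA n) (efyC n))), ?_, ?_, ?_⟩
      · apply append_isPath'
        · rw [Walk.isPath_copy]
          exact Walk.map_isPath_of_injective (fx_inj n) hp₀
        · apply append_isPath'
          · rw [Walk.isPath_copy]
            exact Walk.map_isPath_of_injective (f0_inj n) hq₀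
          · rw [Walk.isPath_copy]
            exact Walk.map_isPath_of_injective (fy_inj n) hr₀
          · intro u hu hu'
            rw [Walk.support_copy] at hu hu'
            obtain ⟨y, hy, rfl⟩ := mem_support_map _ _ hu
            obtain ⟨x, hx, hxu⟩ := mem_support_map _ _ hu'
            have h2 : ((f0 n) y).1 = ((x.1.1, x.1.2 + 2 ^ n) : ℤ × ℤ) := (val_eq hxu).symm
            exact Subtype.ext (glue_LT y.2 x.2 h2)
        · intro u hu hu'
          rw [Walk.support_copy] at hu
          rw [Walk.mem_support_append_iff, Walk.support_copy, Walk.support_copy] at hu'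
          obtain ⟨x, hx, rfl⟩ := mem_support_map _ _ hu
          rcases hu' with hu' | hu'
          · obtain ⟨y, hy, hyu⟩ := mem_support_map _ _ hu'
            have hm : ((fx n) x).1 ∈ sierpVerts (n + 1) := by
              rw [← val_eq hyu]; exact y.2
            have h2 : ((fx n) x).1 = ((x.1.1 + 2 ^ n, x.1.2) : ℤ × ℤ) := rfl
            exact Subtype.ext (glue_LR hm x.2 h2)
          · obtain ⟨y, _, hyu⟩ := mem_support_map _ _ hu'
            have h2 : ((x.1.1 + 2 ^ n, x.1.2) : ℤ × ℤ) = (y.1.1, y.1.2 + 2 ^ n) :=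
              (val_eq hyu).symm
            have hg := glue_RT x.2 y.2 h2
            rw [Prod.mk.injEq] at hg
            exact absurd (Prod.ext (by omega) hg.2) (hpav hplN x hx)
      · rw [Walk.length_append, Walk.length_append, Walk.length_copy, Walk.length_copy,
          Walk.length_copy, Walk.length_map, Walk.length_map, Walk.length_map,
          hplen, hqlen, hrlen]
        omega
      · intro hc u hu
        rw [hceq] at hc
        have hq2 : ql + 2 ≤ (sierpVerts (n + 1)).card := hqcond (by omega)
        rw [Walk.mem_support_append_iff, Walk.mem_support_append_iff, Walk.support_copy,
          Walk.support_copy, Walk.support_copy] at hu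
        rcases hu with hu | hu | hu
        · obtain ⟨x, _, hyu⟩ := mem_support_map _ _ hu
          rw [← val_eq hyu]
          exact avoid_R x.2 _
        · obtain ⟨y, hy, hyu⟩ := mem_support_map _ _ hu
          rw [← val_eq hyu]
          exact hqav hq2 y hy
        · obtain ⟨y, _, hyu⟩ := mem_support_map _ _ hu
          rw [← val_eq hyu]
          exact avoid_T y.2 0

lemma PPall (n : ℕ) : PP n := by
  induction n with
  | zero => exact base
  | succ m ih => exact step m ih

lemma cycle_exists : ∀ n : ℕ, ∀ ℓ : ℕ, 3 ≤ ℓ → ℓ ≤ (sierpVerts (n + 1)).card →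
    ∃ (v : SV (n + 1)) (c : (sierpGraph (n + 1)).Walk v v), c.IsCycle ∧ c.length = ℓ := by
  intro n
  induction n with
  | zero =>
    intro ℓ h3 hl
    rw [card1] at hl
    have hℓ : ℓ = 3 := by omega
    subst hℓ
    refine ⟨va, Walk.cons hab (Walk.cons hbc (Walk.cons hac.symm Walk.nil)), ?_, rfl⟩
    rw [Walk.isCycle_def, Walk.isTrail_def]
    refine ⟨by decide, ?_, by decide⟩
    intro h
    have := congrArg Walk.length h
    simp at this
  | succ m ihm =>
    intro ℓ h3 hl
    have hcs := card_step m
    have hge := card_ge m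
    have h3s := three_s_le m
    have hp1 : 1 ≤ 2 ^ m := Nat.one_le_two_pow
    have hceq : (sierpVerts (m + 1 + 1)).card = (sierpVerts (m + 2)).card := rfl
    rw [hceq] at hl
    set N := (sierpVerts (m + 1)).card with hNdef
    by_cases hsmall : ℓ ≤ N
    · obtain ⟨v, c, hc, hlen⟩ := ihm ℓ h3 hsmall
      exact ⟨(f0 m) v, c.map (f0 m),
        (SimpleGraph.Walk.map_isCycle_iff_of_injective (f0_inj m)).mpr hc,
        by rw [Walk.length_map, hlen]⟩
    · obtain ⟨pl, ql, rl, hsum, hpl1, hpl2, hql1, hql2, hrl1, hrl2⟩ :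
          ∃ pl ql rl : ℕ, pl + ql + rl = ℓ ∧ 2 ^ m ≤ pl ∧ pl + 1 ≤ N ∧ 2 ^ m ≤ ql ∧
            ql + 1 ≤ N ∧ 2 ^ m ≤ rl ∧ rl + 1 ≤ N := by
        refine ⟨min (N - 1) (ℓ - 2 * 2 ^ m),
          min (N - 1) (ℓ - min (N - 1) (ℓ - 2 * 2 ^ m) - 2 ^ m),
          ℓ - min (N - 1) (ℓ - 2 * 2 ^ m) -
            min (N - 1) (ℓ - min (N - 1) (ℓ - 2 * 2 ^ m) - 2 ^ m),
          by omega, by omega, by omega, by omega, by omega, by omega, by omega⟩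
      obtain ⟨p₀, hp₀, hplen, _⟩ := (PPall m pl hpl1 hpl2).2.2
      obtain ⟨q₀, hq₀, hqlen, _⟩ := (PPall m ql hql1 hql2).1
      obtain ⟨r₀, hr₀, hrlen, _⟩ := ((PPall m rl hrl1 hrl2).2.1).symm
      set P := (p₀.map (f0 m)).copy (ef0B m) (ef0C m) with hP
      set Q := (q₀.map (fy m)).copy (efyA m) (efyB m) with hQ
      set R := (r₀.map (fx m)).copy (efxC m) (efxA m) with hR
      have hPpath : P.IsPath := by
        rw [hP, Walk.isPath_copy]
        exact Walk.map_isPath_of_injective (f0_inj m) hp₀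
      have hQpath : Q.IsPath := by
        rw [hQ, Walk.isPath_copy]
        exact Walk.map_isPath_of_injective (fy_inj m) hq₀
      have hRpath : R.IsPath := by
        rw [hR, Walk.isPath_copy]
        exact Walk.map_isPath_of_injective (fx_inj m) hr₀
      have hPQ : (P.append Q).IsPath := by
        apply append_isPath' hPpath hQpath
        intro u hu hu'
        rw [hP, Walk.support_copy] at hu
        rw [hQ, Walk.support_copy] at hu'
        obtain ⟨x, hx, rfl⟩ := mem_support_map _ _ hu
        obtain ⟨y, _, hyu⟩ := mem_support_map _ _ hu'
        have h2 : ((f0 m) x).1 = ((y.1.1, y.1.2 + 2 ^ m) : ℤ × ℤ) := (val_eq hyu).symm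
        exact Subtype.ext (glue_LT x.2 y.2 h2)
      refine ⟨m1 m, (P.append Q).append R, ?_, ?_⟩
      · apply append_isCycle' hPQ hRpath
        · intro h
          have h' : (((2:ℤ) ^ m, (0:ℤ)) : ℤ × ℤ) = ((2 ^ m : ℤ), (2 ^ m : ℤ)) := val_eq h
          rw [Prod.mk.injEq] at h'
          have := pow_pos' m
          omega
        · intro u hu hu'
          rw [Walk.mem_support_append_iff, hP, hQ, Walk.support_copy, Walk.support_copy] at hu
          rw [hR, Walk.support_copy] at hu'
          obtain ⟨y, _, rfl⟩ := mem_support_map _ _ hu'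
          rcases hu with hu | hu
          · obtain ⟨x, _, hxu⟩ := mem_support_map _ _ hu
            have hm : ((fx m) y).1 ∈ sierpVerts (m + 1) := by
              rw [← val_eq hxu]; exact x.2
            exact Or.inl (Subtype.ext (glue_LR hm y.2 rfl))
          · obtain ⟨x, _, hxu⟩ := mem_support_map _ _ hu
            have h2 : ((y.1.1 + 2 ^ m, y.1.2) : ℤ × ℤ) = (x.1.1, x.1.2 + 2 ^ m) :=
              (val_eq hxu).symm
            exact Or.inr (Subtype.ext (glue_RT y.2 x.2 h2))
        · rw [Walk.length_append, hP, hQ, hR, Walk.length_copy, Walk.length_copy,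
            Walk.length_copy, Walk.length_map, Walk.length_map, Walk.length_map,
            hplen, hqlen, hrlen]
          omega
      · rw [Walk.length_append, Walk.length_append, hP, hQ, hR, Walk.length_copy,
          Walk.length_copy, Walk.length_copy, Walk.length_map, Walk.length_map,
          Walk.length_map, hplen, hqlen, hrlen]
        omega

end Sierp

theorem sierp_pancyclic (n : ℕ) (hn : 1 ≤ n) (l : ℕ) (h3 : 3 ≤ l)
    (hl : l ≤ (sierpVerts n).card) :
    ∃ (v : {p : ℤ × ℤ // p ∈ sierpVerts n}) (c : (sierpGraph n).Walk v v),
      c.IsCycle ∧ c.length = l := by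
  cases n with
  | zero => omega
  | succ k => exact Sierp.cycle_exists k l h3 hl
end

section
/- The domination number of the Sierpiński gasket graph satisfies γ(S_{n+1}) = 3·γ(S_n) for all n ≥ 4. -/
/-- `D` is a dominating set of `G`. -/
def IsDominatingSet {V : Type*} (G : SimpleGraph V) (D : Finset V) : Prop :=
  ∀ v : V, v ∈ D ∨ ∃ u ∈ D, G.Adj u v

/-- The domination number of a finite graph. -/
noncomputable def dominationNumber (V : Type*) [Fintype V] (G : SimpleGraph V) : ℕ :=
  sInf {k | ∃ D : Finset V, IsDominatingSet G D ∧ D.card = k}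


lemma sierpVerts_eq (n : ℕ) : sierpVerts (n+2) =
    sierpVerts (n+1) ∪ (sierpVerts (n+1)).image (fun p => (p.1 + 2^n, p.2)) ∪
      (sierpVerts (n+1)).image (fun p => (p.1, p.2 + 2^n)) := by
  rw [sierpVerts]

lemma sierpEdges_eq (n : ℕ) : sierpEdges (n+2) =
    sierpEdges (n+1) ∪
      (sierpEdges (n+1)).image (fun e => ((e.1.1 + 2^n, e.1.2), (e.2.1 + 2^n, e.2.2))) ∪
      (sierpEdges (n+1)).image (fun e => ((e.1.1, e.1.2 + 2^n), (e.2.1, e.2.2 + 2^n))) := by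
  rw [sierpEdges]


lemma verts_bounds : ∀ n, ∀ p ∈ sierpVerts (n+1), 0 ≤ p.1 ∧ 0 ≤ p.2 ∧ p.1 + p.2 ≤ 2^n := by
  intro n
  induction n with
  | zero => decide
  | succ m ih =>
    intro p hp
    rw [sierpVerts_eq] at hp
    simp only [Finset.mem_union, Finset.mem_image] at hp
    have h2 : (2:ℤ)^(m+1) = 2^m + 2^m := by ring
    have hp2 : (0:ℤ) ≤ 2^m := by positivity
    rcases hp with (hp | ⟨q, hq, rfl⟩) | ⟨q, hq, rfl⟩
    · obtain ⟨h1, h2', h3⟩ := ih p hp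
      exact ⟨h1, h2', by omega⟩
    · obtain ⟨h1, h2', h3⟩ := ih q hq
      dsimp only
      omega
    · obtain ⟨h1, h2', h3⟩ := ih q hq
      dsimp only
      omega

lemma cornerA_mem : ∀ n, ((0:ℤ),(0:ℤ)) ∈ sierpVerts n := by
  intro n
  match n with
  | 0 => decide
  | 1 => decide
  | n+2 =>
    rw [sierpVerts_eq]
    simp only [Finset.mem_union]
    exact Or.inl (Or.inl (cornerA_mem (n+1)))

lemma cornerB_mem : ∀ n, ((2^n:ℤ), (0:ℤ)) ∈ sierpVerts (n+1) := by
  intro n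
  match n with
  | 0 => decide
  | n+1 =>
    rw [sierpVerts_eq]
    simp only [Finset.mem_union, Finset.mem_image]
    refine Or.inl (Or.inr ⟨(2^n, 0), cornerB_mem n, ?_⟩)
    simp; ring

lemma cornerC_mem : ∀ n, ((0:ℤ), (2^n:ℤ)) ∈ sierpVerts (n+1) := by
  intro n
  match n with
  | 0 => decide
  | n+1 =>
    rw [sierpVerts_eq]
    simp only [Finset.mem_union, Finset.mem_image]
    refine Or.inr ⟨(0, 2^n), cornerC_mem n, ?_⟩
    simp; ring

lemma edges_mem_verts : ∀ n, ∀ e ∈ sierpEdges n, e.1 ∈ sierpVerts n ∧ e.2 ∈ sierpVerts n := by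
  intro n
  match n with
  | 0 => decide
  | 1 => decide
  | n+2 =>
    intro e he
    rw [sierpEdges_eq] at he
    rw [sierpVerts_eq]
    simp only [Finset.mem_union, Finset.mem_image] at he ⊢
    rcases he with (he | ⟨d, hd, rfl⟩) | ⟨d, hd, rfl⟩
    · obtain ⟨h1, h2⟩ := edges_mem_verts (n+1) e he
      exact ⟨Or.inl (Or.inl h1), Or.inl (Or.inl h2)⟩
    · obtain ⟨h1, h2⟩ := edges_mem_verts (n+1) d hd
      exact ⟨Or.inl (Or.inr ⟨d.1, h1, rfl⟩), Or.inl (Or.inr ⟨d.2, h2, rfl⟩)⟩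
    · obtain ⟨h1, h2⟩ := edges_mem_verts (n+1) d hd
      exact ⟨Or.inr ⟨d.1, h1, rfl⟩, Or.inr ⟨d.2, h2, rfl⟩⟩

lemma edges_ne : ∀ n, ∀ e ∈ sierpEdges n, e.1 ≠ e.2 := by
  intro n
  match n with
  | 0 => decide
  | 1 => decide
  | n+2 =>
    intro e he
    rw [sierpEdges_eq] at he
    simp only [Finset.mem_union, Finset.mem_image] at he
    rcases he with (he | ⟨d, hd, rfl⟩) | ⟨d, hd, rfl⟩
    · exact edges_ne (n+1) e he
    · have := edges_ne (n+1) d hd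
      simp only [ne_eq, Prod.ext_iff] at this ⊢
      omega
    · have := edges_ne (n+1) d hd
      simp only [ne_eq, Prod.ext_iff] at this ⊢
      omega

/-- `D` dominates every vertex of `S` via level-`n` edges. -/
def Dominates (n : ℕ) (D S : Finset (ℤ × ℤ)) : Prop :=
  ∀ v ∈ S, v ∈ D ∨ ∃ u ∈ D, (u, v) ∈ sierpEdges n ∨ (v, u) ∈ sierpEdges n

instance (n : ℕ) (D S : Finset (ℤ × ℤ)) : Decidable (Dominates n D S) := by
  unfold Dominates; infer_instance

lemma Dominates.mono {n : ℕ} {D D' S : Finset (ℤ × ℤ)} (h : D ⊆ D')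
    (hd : Dominates n D S) : Dominates n D' S := by
  intro v hv
  rcases hd v hv with h1 | ⟨u, hu, he⟩
  · exact Or.inl (h h1)
  · exact Or.inr ⟨u, h hu, he⟩

def f3 : ℕ → ℕ
  | 0 => 0
  | 1 => 1
  | 2 => 1
  | _ + 3 => 2

/-- number of the three corners (for side length `s`) contained in `D`. -/
def cc (s : ℤ) (D : Finset (ℤ × ℤ)) : ℕ :=
  (if ((0:ℤ),(0:ℤ)) ∈ D then 1 else 0) + (if ((s,(0:ℤ))) ∈ D then 1 else 0) +
    (if (((0:ℤ),s)) ∈ D then 1 else 0)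

lemma cc_mono {s : ℤ} {D D' : Finset (ℤ × ℤ)} (h : D ⊆ D') : cc s D ≤ cc s D' := by
  unfold cc
  gcongr <;> split <;> simp_all [h _]

/-- The main lower-bound invariant, at level `m+3`. -/
def Pm (m : ℕ) : Prop :=
  ∀ D ⊆ sierpVerts (m+3), Dominates (m+3) D (sierpVerts (m+3) \ sierpCorners (m+3)) →
    3^(m+1) + f3 (cc (2^(m+2)) D) ≤ D.card

/-- Explicit recursive dominating set; `sierpDom k` lives in `sierpVerts (k+3)`. -/
def sierpDom : ℕ → Finset (ℤ × ℤ)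
  | 0 => {(0,1),(1,3),(3,0)}
  | k+1 =>
      sierpDom k ∪ (sierpDom k).image (fun p => (p.1 + 2^(k+2), p.2)) ∪
        (sierpDom k).image (fun p => (p.1, p.2 + 2^(k+2)))

lemma sierpDom_eq (k : ℕ) : sierpDom (k+1) =
    sierpDom k ∪ (sierpDom k).image (fun p => (p.1 + 2^(k+2), p.2)) ∪
      (sierpDom k).image (fun p => (p.1, p.2 + 2^(k+2))) := by
  rw [sierpDom]

lemma sierpDom_subset : ∀ k, sierpDom k ⊆ sierpVerts (k+3) := by
  intro k
  match k with
  | 0 => decide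
  | k+1 =>
    intro p hp
    rw [sierpDom_eq] at hp
    show p ∈ sierpVerts (k+2+2)
    rw [sierpVerts_eq]
    simp only [Finset.mem_union, Finset.mem_image] at hp ⊢
    rcases hp with (hp | ⟨q, hq, rfl⟩) | ⟨q, hq, rfl⟩
    · exact Or.inl (Or.inl (sierpDom_subset k hp))
    · exact Or.inl (Or.inr ⟨q, sierpDom_subset k hq, rfl⟩)
    · exact Or.inr ⟨q, sierpDom_subset k hq, rfl⟩

lemma sierpDom_bounds : ∀ k, ∀ p ∈ sierpDom k,
    0 ≤ p.1 ∧ 0 ≤ p.2 ∧ p.1 + p.2 ≤ 2^(k+2) ∧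
      p ≠ (0,0) ∧ p ≠ (2^(k+2), 0) ∧ p ≠ (0, 2^(k+2)) := by
  intro k
  match k with
  | 0 => decide
  | k+1 =>
    intro p hp
    have hp2 : (0:ℤ) < 2^(k+2) := by positivity
    have hpow : (2:ℤ)^(k+1+2) = 2^(k+2) + 2^(k+2) := by ring
    rw [sierpDom_eq] at hp
    simp only [Finset.mem_union, Finset.mem_image] at hp
    rcases hp with (hp | ⟨q, hq, rfl⟩) | ⟨q, hq, rfl⟩
    · obtain ⟨h1, h2, h3, h4, h5, h6⟩ := sierpDom_bounds k _ hp
      simp only [ne_eq, Prod.ext_iff, not_and] at h4 h5 h6 ⊢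
      omega
    · obtain ⟨h1, h2, h3, h4, h5, h6⟩ := sierpDom_bounds k _ hq
      simp only [ne_eq, Prod.ext_iff, not_and] at h4 h5 h6 ⊢
      omega
    · obtain ⟨h1, h2, h3, h4, h5, h6⟩ := sierpDom_bounds k _ hq
      simp only [ne_eq, Prod.ext_iff, not_and] at h4 h5 h6 ⊢
      omega

lemma sierpDom_card : ∀ k, (sierpDom k).card = 3^(k+1) := by
  intro k
  match k with
  | 0 => decide
  | k+1 =>
    have hp2 : (0:ℤ) < 2^(k+2) := by positivity
    have hinjx : Function.Injective (fun p : ℤ × ℤ => (p.1 + 2^(k+2), p.2)) := by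
      intro a b h; simp only [Prod.ext_iff] at h ⊢; omega
    have hinjy : Function.Injective (fun p : ℤ × ℤ => (p.1, p.2 + 2^(k+2))) := by
      intro a b h; simp only [Prod.ext_iff] at h ⊢; omega
    have hd1 : Disjoint (sierpDom k) ((sierpDom k).image (fun p => (p.1 + 2^(k+2), p.2))) := by
      rw [Finset.disjoint_left]
      rintro p hp hpx
      simp only [Finset.mem_image] at hpx
      obtain ⟨q, hq, rfl⟩ := hpx
      obtain ⟨h1, h2, h3, h4, _, _⟩ := sierpDom_bounds k _ hp
      obtain ⟨g1, g2, g3, g4, _, _⟩ := sierpDom_bounds k _ hq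
      simp only [ne_eq, Prod.ext_iff, not_and] at g4 ⊢
      omega
    have hd2 : Disjoint (sierpDom k ∪ (sierpDom k).image (fun p => (p.1 + 2^(k+2), p.2)))
        ((sierpDom k).image (fun p => (p.1, p.2 + 2^(k+2)))) := by
      rw [Finset.disjoint_left]
      rintro p hp hpy
      simp only [Finset.mem_image] at hpy
      obtain ⟨q, hq, rfl⟩ := hpy
      obtain ⟨g1, g2, g3, g4, g5, g6⟩ := sierpDom_bounds k _ hq
      simp only [ne_eq, Prod.ext_iff, not_and] at g4 g5 g6
      simp only [Finset.mem_union, Finset.mem_image] at hp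
      rcases hp with hp | ⟨r, hr, hre⟩
      · obtain ⟨h1, h2, h3, h4, h5, h6⟩ := sierpDom_bounds k _ hp
        simp only [ne_eq, Prod.ext_iff, not_and] at h4 h5 h6 ⊢
        omega
      · obtain ⟨h1, h2, h3, h4, h5, h6⟩ := sierpDom_bounds k _ hr
        simp only [ne_eq, Prod.ext_iff, not_and] at h4 h5 h6 hre ⊢
        omega
    show (sierpDom k ∪ _ ∪ _).card = 3^(k+2)
    rw [Finset.card_union_of_disjoint hd2, Finset.card_union_of_disjoint hd1,
      Finset.card_image_of_injective _ hinjx, Finset.card_image_of_injective _ hinjy,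
      sierpDom_card k]
    ring

lemma sierpDom_dominates : ∀ k, Dominates (k+3) (sierpDom k) (sierpVerts (k+3)) := by
  intro k
  match k with
  | 0 => decide
  | k+1 =>
    intro v hv
    show v ∈ sierpDom (k+1) ∨ ∃ u ∈ sierpDom (k+1),
      (u, v) ∈ sierpEdges (k+2+2) ∨ (v, u) ∈ sierpEdges (k+2+2)
    have hmemD : ∀ w, w ∈ sierpDom k → w ∈ sierpDom (k+1) := by
      intro w hw; rw [sierpDom_eq]; simp only [Finset.mem_union]; exact Or.inl (Or.inl hw)
    have hmemDx : ∀ w, w ∈ sierpDom k → ((w.1 + 2^(k+2), w.2) : ℤ × ℤ) ∈ sierpDom (k+1) := by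
      intro w hw; rw [sierpDom_eq]; simp only [Finset.mem_union, Finset.mem_image]
      exact Or.inl (Or.inr ⟨w, hw, rfl⟩)
    have hmemDy : ∀ w, w ∈ sierpDom k → ((w.1, w.2 + 2^(k+2)) : ℤ × ℤ) ∈ sierpDom (k+1) := by
      intro w hw; rw [sierpDom_eq]; simp only [Finset.mem_union, Finset.mem_image]
      exact Or.inr ⟨w, hw, rfl⟩
    have hmemE : ∀ e, e ∈ sierpEdges (k+3) → e ∈ sierpEdges (k+2+2) := by
      intro e he; rw [show k+2+2 = k+3+1 from rfl, sierpEdges_eq]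
      simp only [Finset.mem_union]; exact Or.inl (Or.inl he)
    have hmemEx : ∀ e : (ℤ×ℤ)×(ℤ×ℤ), e ∈ sierpEdges (k+3) →
        (((e.1.1 + 2^(k+2), e.1.2), (e.2.1 + 2^(k+2), e.2.2)) : (ℤ×ℤ)×(ℤ×ℤ)) ∈ sierpEdges (k+2+2) := by
      intro e he; rw [show k+2+2 = k+3+1 from rfl, sierpEdges_eq]
      simp only [Finset.mem_union, Finset.mem_image]
      exact Or.inl (Or.inr ⟨e, he, rfl⟩)
    have hmemEy : ∀ e : (ℤ×ℤ)×(ℤ×ℤ), e ∈ sierpEdges (k+3) →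
        (((e.1.1, e.1.2 + 2^(k+2)), (e.2.1, e.2.2 + 2^(k+2))) : (ℤ×ℤ)×(ℤ×ℤ)) ∈ sierpEdges (k+2+2) := by
      intro e he; rw [show k+2+2 = k+3+1 from rfl, sierpEdges_eq]
      simp only [Finset.mem_union, Finset.mem_image]
      exact Or.inr ⟨e, he, rfl⟩
    have hv' : v ∈ sierpVerts (k+2+2) := hv
    rw [sierpVerts_eq] at hv'
    simp only [Finset.mem_union, Finset.mem_image] at hv'
    rcases hv' with (hv' | ⟨q, hq, rfl⟩) | ⟨q, hq, rfl⟩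
    · rcases sierpDom_dominates k v hv' with h | ⟨u, hu, he⟩
      · exact Or.inl (hmemD v h)
      · refine Or.inr ⟨u, hmemD u hu, ?_⟩
        rcases he with he | he
        · exact Or.inl (hmemE _ he)
        · exact Or.inr (hmemE _ he)
    · rcases sierpDom_dominates k q hq with h | ⟨u, hu, he⟩
      · exact Or.inl (hmemDx q h)
      · refine Or.inr ⟨(u.1 + 2^(k+2), u.2), hmemDx u hu, ?_⟩
        rcases he with he | he
        · exact Or.inl (hmemEx (u, q) he)
        · exact Or.inr (hmemEx (q, u) he)
    · rcases sierpDom_dominates k q hq with h | ⟨u, hu, he⟩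
      · exact Or.inl (hmemDy q h)
      · refine Or.inr ⟨(u.1, u.2 + 2^(k+2)), hmemDy u hu, ?_⟩
        rcases he with he | he
        · exact Or.inl (hmemEy (u, q) he)
        · exact Or.inr (hmemEy (q, u) he)

def domChk (E : List ((ℤ × ℤ) × (ℤ × ℤ))) (D S : List (ℤ × ℤ)) : Bool :=
  S.all (fun v => D.contains v || D.any (fun u => E.contains (u, v) || E.contains (v, u)))

lemma not_Dominates_of_domChk {n : ℕ} {El : List ((ℤ × ℤ) × (ℤ × ℤ))}
    (hE : ∀ e ∈ sierpEdges n, e ∈ El) {D : Finset (ℤ × ℤ)} {Dl : List (ℤ × ℤ)}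
    (hD : ∀ x ∈ D, x ∈ Dl) {S : Finset (ℤ × ℤ)} {Sl : List (ℤ × ℤ)}
    (hS : ∀ x ∈ Sl, x ∈ S)
    (h : domChk El Dl Sl = false) : ¬ Dominates n D S := by
  intro hdom
  unfold domChk at h
  rw [Bool.eq_false_iff] at h
  apply h
  rw [List.all_eq_true]
  intro v hv
  rcases hdom v (hS v hv) with h1 | ⟨u, hu, he⟩
  · rw [Bool.or_eq_true]
    refine Or.inl ?_
    rw [List.contains, List.elem_iff]
    exact hD v h1
  · rw [Bool.or_eq_true]
    refine Or.inr ?_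
    rw [List.any_eq_true]
    refine ⟨u, hD u hu, ?_⟩
    rw [Bool.or_eq_true, List.contains, List.contains, List.elem_iff, List.elem_iff]
    rcases he with he | he
    · exact Or.inl (hE _ he)
    · exact Or.inr (hE _ he)

def V3l : List (ℤ × ℤ) := [(0, 0), (0, 1), (0, 2), (0, 3), (0, 4), (1, 0), (1, 1), (1, 2), (1, 3), (2, 0), (2, 1), (2, 2), (3, 0), (3, 1), (4, 0)]
def S3l : List (ℤ × ℤ) := [(0, 1), (0, 2), (0, 3), (1, 0), (1, 1), (1, 2), (1, 3), (2, 0), (2, 1), (2, 2), (3, 0), (3, 1)]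
def E3l : List ((ℤ × ℤ) × (ℤ × ℤ)) := [((0, 0), (1, 0)), ((0, 0), (0, 1)), ((1, 0), (0, 1)), ((1, 0), (2, 0)), ((1, 0), (1, 1)), ((2, 0), (1, 1)), ((0, 1), (1, 1)), ((0, 1), (0, 2)), ((1, 1), (0, 2)), ((2, 0), (3, 0)), ((2, 0), (2, 1)), ((3, 0), (2, 1)), ((3, 0), (4, 0)), ((3, 0), (3, 1)), ((4, 0), (3, 1)), ((2, 1), (3, 1)), ((2, 1), (2, 2)), ((3, 1), (2, 2)), ((0, 2), (1, 2)), ((0, 2), (0, 3)), ((1, 2), (0, 3)), ((1, 2), (2, 2)), ((1, 2), (1, 3)), ((2, 2), (1, 3)), ((0, 3), (1, 3)), ((0, 3), (0, 4)), ((1, 3), (0, 4))]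

set_option maxRecDepth 40000 in
lemma edges3_sub : ∀ e ∈ sierpEdges 3, e ∈ E3l := by decide

set_option maxRecDepth 40000 in
lemma verts3_sub : ∀ x ∈ sierpVerts 3, x ∈ V3l := by decide

set_option maxRecDepth 40000 in
lemma S3l_sub : ∀ x ∈ S3l, x ∈ sierpVerts 3 \ sierpCorners 3 := by decide

set_option maxRecDepth 40000 in
lemma bf1 : ∀ u ∈ V3l, ∀ v ∈ V3l, domChk E3l [u, v] S3l = false := by decide

set_option maxRecDepth 100000 in
set_option maxHeartbeats 1600000 in
lemma bf2 : ∀ c ∈ [((0:ℤ),(0:ℤ)), ((4:ℤ),(0:ℤ)), ((0:ℤ),(4:ℤ))], ∀ u ∈ V3l, ∀ v ∈ V3l,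
    domChk E3l [c, u, v] S3l = false := by decide

set_option maxRecDepth 40000 in
lemma bf3 : ∀ w ∈ V3l,
    domChk E3l [w, (0,0), (4,0), (0,4)] S3l = false := by decide

lemma f3_le_two : ∀ t, f3 t ≤ 2 := by
  intro t; rcases t with _|_|_|t <;> simp [f3]

lemma f3_pos_le (t : ℕ) (h : 1 ≤ f3 t) : 1 ≤ t := by
  rcases t with _|t
  · simp [f3] at h
  · omega

lemma f3_two_le (t : ℕ) (h : 2 ≤ f3 t) : 3 ≤ t := by
  rcases t with _|_|_|t
  · simp [f3] at h
  · simp [f3] at h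
  · simp [f3] at h
  · omega

lemma Pm_zero : Pm 0 := by
  intro D hD hdom
  by_contra hlt
  push_neg at hlt
  have h4 : ((2:ℤ)^(0+2)) = 4 := by norm_num
  rw [h4] at hlt
  have hfle := f3_le_two (cc 4 D)
  have hcard : D.card ≤ 4 := by omega
  have hV3 : (3:ℕ) + 1 ≤ (sierpVerts (0+3)).card := by decide
  rcases Nat.lt_or_ge D.card 3 with hc2 | hc3
  · -- card ≤ 2 : pad to exactly 2
    obtain ⟨E, hDE, hEV, hEcard⟩ :=
      Finset.exists_subsuperset_card_eq hD (show D.card ≤ 2 by omega) (by omega)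
    obtain ⟨u, v, huv, rfl⟩ := Finset.card_eq_two.mp hEcard
    have hu : u ∈ V3l := verts3_sub u (hEV (by simp))
    have hv : v ∈ V3l := verts3_sub v (hEV (by simp))
    exact not_Dominates_of_domChk edges3_sub (by intro x hx; simpa using hx) S3l_sub
      (bf1 u hu v hv) (hdom.mono hDE)
  · rcases Nat.lt_or_ge D.card 4 with hc3' | hc4
    · -- card = 3, some corner in D
      have hcc1 : 1 ≤ cc 4 D := f3_pos_le _ (by omega)
      have hcor : ∃ c ∈ [((0:ℤ),(0:ℤ)), ((4:ℤ),(0:ℤ)), ((0:ℤ),(4:ℤ))], c ∈ D := by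
        unfold cc at hcc1
        by_contra hno
        push_neg at hno
        simp only [List.mem_cons, List.not_mem_nil, or_false, forall_eq_or_imp, forall_eq] at hno
        rw [if_neg hno.1, if_neg hno.2.1, if_neg hno.2.2] at hcc1
        omega
      obtain ⟨c, hcl, hcD⟩ := hcor
      obtain ⟨E, hDE, hEV, hEcard⟩ :=
        Finset.exists_subsuperset_card_eq hD (show D.card ≤ 3 by omega) (by omega)
      have hcE : c ∈ E := hDE hcD
      have herase : (E.erase c).card = 2 := by
        rw [Finset.card_erase_of_mem hcE, hEcard]
      obtain ⟨u, v, huv, her⟩ := Finset.card_eq_two.mp herase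
      have hEeq : E = insert c {u, v} := by
        rw [← her, Finset.insert_erase hcE]
      have hu : u ∈ V3l := verts3_sub u (hEV (by rw [hEeq]; simp))
      have hv : v ∈ V3l := verts3_sub v (hEV (by rw [hEeq]; simp))
      refine not_Dominates_of_domChk edges3_sub ?_ S3l_sub
        (bf2 c hcl u hu v hv) (hdom.mono hDE)
      intro x hx
      rw [hEeq] at hx
      simpa using hx
    · -- card = 4, all corners in D
      have hcc3 : 3 ≤ cc 4 D := f3_two_le _ (by omega)
      have hc1 : ((0:ℤ),(0:ℤ)) ∈ D ∧ ((4:ℤ),(0:ℤ)) ∈ D ∧ ((0:ℤ),(4:ℤ)) ∈ D := by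
        unfold cc at hcc3
        by_contra hno
        push_neg at hno
        by_cases h1 : ((0:ℤ),(0:ℤ)) ∈ D <;> by_cases h2 : ((4:ℤ),(0:ℤ)) ∈ D <;>
          by_cases h3 : ((0:ℤ),(4:ℤ)) ∈ D <;>
          simp only [h1, h2, h3, if_true, if_false] at hcc3 <;> tauto
      have hcorsub : sierpCorners 3 ⊆ D := by
        intro x hx
        simp only [sierpCorners, Finset.mem_insert, Finset.mem_singleton] at hx
        norm_num at hx
        rcases hx with rfl | rfl | rfl
        · exact hc1.1
        · exact hc1.2.1
        · exact hc1.2.2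
      have hsd : (D \ sierpCorners 3).card = D.card - 3 := by
        rw [Finset.card_sdiff_of_subset hcorsub]
        norm_num [show (sierpCorners 3).card = 3 from by decide]
      have hsd1 : (D \ sierpCorners 3).card = 1 := by omega
      obtain ⟨w, hw⟩ := Finset.card_eq_one.mp hsd1
      have hDeq : D = insert w (sierpCorners 3) := by
        rw [← Finset.sdiff_union_of_subset hcorsub, hw, Finset.insert_eq]
      have hwV : w ∈ V3l := by
        apply verts3_sub
        apply hD
        rw [hDeq]; simp
      refine not_Dominates_of_domChk edges3_sub ?_ S3l_sub (bf3 w hwV) hdom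
      intro x hx
      rw [hDeq] at hx
      rcases Finset.mem_insert.mp hx with rfl | hx
      · simp
      · simp only [sierpCorners, Finset.mem_insert, Finset.mem_singleton] at hx
        norm_num at hx
        rcases hx with rfl | rfl | rfl <;> simp

section Step
variable (m : ℕ)

lemma corners_succ_mem (p : ℤ × ℤ) :
    p ∈ sierpCorners (m+4) ↔ p = (0,0) ∨ p = (2^(m+3), 0) ∨ p = (0, 2^(m+3)) := by
  simp [sierpCorners]

lemma corners_mem (p : ℤ × ℤ) :
    p ∈ sierpCorners (m+3) ↔ p = (0,0) ∨ p = (2^(m+2), 0) ∨ p = (0, 2^(m+2)) := by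
  simp [sierpCorners]

lemma dom_copy1 (D : Finset (ℤ × ℤ))
    (hdom : Dominates (m+4) D (sierpVerts (m+4) \ sierpCorners (m+4))) :
    Dominates (m+3) (D ∩ sierpVerts (m+3)) (sierpVerts (m+3) \ sierpCorners (m+3)) := by
  intro v hv
  rw [Finset.mem_sdiff] at hv
  obtain ⟨hvW, hvnc⟩ := hv
  have hb := verts_bounds (m+2) v hvW
  have hs : (0:ℤ) < 2^(m+2) := by positivity
  have hss : (2:ℤ)^(m+3) = 2^(m+2) + 2^(m+2) := by ring
  have hv' : v ∈ sierpVerts (m+4) \ sierpCorners (m+4) := by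
    rw [Finset.mem_sdiff]
    constructor
    · rw [show m+4 = m+2+2 from rfl, sierpVerts_eq]
      exact Finset.mem_union_left _ (Finset.mem_union_left _ hvW)
    · rw [corners_succ_mem]
      push_neg
      rw [corners_mem] at hvnc
      push_neg at hvnc
      simp only [ne_eq, Prod.ext_iff, not_and] at hvnc ⊢
      refine ⟨hvnc.1, ?_, ?_⟩ <;> intro h1 <;> omega
  rcases hdom v hv' with h1 | ⟨u, hu, he⟩
  · exact Or.inl (Finset.mem_inter.mpr ⟨h1, hvW⟩)
  · -- analyze the edge
    have main : ∀ w z : ℤ × ℤ, (w, z) ∈ sierpEdges (m+4) → z = v →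
        w ∈ sierpVerts (m+3) ∧ (w, v) ∈ sierpEdges (m+3) := by
      intro w z hwz hzv
      rw [show m+4 = m+2+2 from rfl, sierpEdges_eq] at hwz
      simp only [Finset.mem_union, Finset.mem_image] at hwz
      rcases hwz with (hwz | ⟨e, he', heq⟩) | ⟨e, he', heq⟩
      · subst hzv
        exact ⟨(edges_mem_verts _ _ hwz).1, hwz⟩
      · exfalso
        have h2 := (edges_mem_verts _ _ he').2
        rw [Prod.ext_iff] at heq
        obtain ⟨-, h4⟩ := heq
        have hzWx : z = ((e.2.1 + 2^(m+2), e.2.2) : ℤ × ℤ) := h4.symm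
        subst hzv
        have hb2 := verts_bounds (m+2) e.2 h2
        rw [corners_mem] at hvnc
        push_neg at hvnc
        have := hvnc.2.1
        rw [hzWx] at hb this
        simp only [ne_eq, Prod.ext_iff, not_and] at this
        dsimp only at this hb
        omega
      · exfalso
        have h2 := (edges_mem_verts _ _ he').2
        rw [Prod.ext_iff] at heq
        obtain ⟨-, h4⟩ := heq
        have hzWy : z = ((e.2.1, e.2.2 + 2^(m+2)) : ℤ × ℤ) := h4.symm
        subst hzv
        have hb2 := verts_bounds (m+2) e.2 h2
        rw [corners_mem] at hvnc
        push_neg at hvnc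
        have := hvnc.2.2
        rw [hzWy] at hb this
        simp only [ne_eq, Prod.ext_iff, not_and] at this
        dsimp only at this hb
        omega
    rcases he with he | he
    · obtain ⟨hw, hedge⟩ := main u v he rfl
      exact Or.inr ⟨u, Finset.mem_inter.mpr ⟨hu, hw⟩, Or.inl hedge⟩
    · -- (v, u) ∈ edges : u is the dominator, edge (v,u); same analysis with roles swapped
      have main2 : ∀ w z : ℤ × ℤ, (w, z) ∈ sierpEdges (m+4) → w = v →
          z ∈ sierpVerts (m+3) ∧ (v, z) ∈ sierpEdges (m+3) := by
        intro w z hwz hwv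
        rw [show m+4 = m+2+2 from rfl, sierpEdges_eq] at hwz
        simp only [Finset.mem_union, Finset.mem_image] at hwz
        rcases hwz with (hwz | ⟨e, he', heq⟩) | ⟨e, he', heq⟩
        · subst hwv
          exact ⟨(edges_mem_verts _ _ hwz).2, hwz⟩
        · exfalso
          have h2 := (edges_mem_verts _ _ he').1
          rw [Prod.ext_iff] at heq
          obtain ⟨h4, -⟩ := heq
          have hzWx : w = ((e.1.1 + 2^(m+2), e.1.2) : ℤ × ℤ) := h4.symm
          subst hwv
          have hb2 := verts_bounds (m+2) e.1 h2
          rw [corners_mem] at hvnc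
          push_neg at hvnc
          have := hvnc.2.1
          rw [hzWx] at hb this
          simp only [ne_eq, Prod.ext_iff, not_and] at this
          dsimp only at this hb
          omega
        · exfalso
          have h2 := (edges_mem_verts _ _ he').1
          rw [Prod.ext_iff] at heq
          obtain ⟨h4, -⟩ := heq
          have hzWy : w = ((e.1.1, e.1.2 + 2^(m+2)) : ℤ × ℤ) := h4.symm
          subst hwv
          have hb2 := verts_bounds (m+2) e.1 h2
          rw [corners_mem] at hvnc
          push_neg at hvnc
          have := hvnc.2.2
          rw [hzWy] at hb this
          simp only [ne_eq, Prod.ext_iff, not_and] at this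
          dsimp only at this hb
          omega
      obtain ⟨hw, hedge⟩ := main2 v u he rfl
      exact Or.inr ⟨u, Finset.mem_inter.mpr ⟨hu, hw⟩, Or.inr hedge⟩

end Step

section Step2
variable (m : ℕ)

lemma inter_WWx (p : ℤ × ℤ) (h1 : p ∈ sierpVerts (m+3))
    (h2 : p ∈ (sierpVerts (m+3)).image (fun q => (q.1 + 2^(m+2), q.2))) :
    p = (2^(m+2), 0) := by
  obtain ⟨hb1, hb2, hb3⟩ := verts_bounds (m+2) p h1
  simp only [Finset.mem_image] at h2
  obtain ⟨q, hq, rfl⟩ := h2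
  obtain ⟨g1, g2, g3⟩ := verts_bounds (m+2) q hq
  simp only [Prod.ext_iff]
  try dsimp only at *
  omega

lemma inter_WWy (p : ℤ × ℤ) (h1 : p ∈ sierpVerts (m+3))
    (h2 : p ∈ (sierpVerts (m+3)).image (fun q => (q.1, q.2 + 2^(m+2)))) :
    p = (0, 2^(m+2)) := by
  obtain ⟨hb1, hb2, hb3⟩ := verts_bounds (m+2) p h1
  simp only [Finset.mem_image] at h2
  obtain ⟨q, hq, rfl⟩ := h2
  obtain ⟨g1, g2, g3⟩ := verts_bounds (m+2) q hq
  simp only [Prod.ext_iff]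
  try dsimp only at *
  omega

lemma inter_WxWy (p : ℤ × ℤ)
    (h1 : p ∈ (sierpVerts (m+3)).image (fun q => (q.1 + 2^(m+2), q.2)))
    (h2 : p ∈ (sierpVerts (m+3)).image (fun q => (q.1, q.2 + 2^(m+2)))) :
    p = (2^(m+2), 2^(m+2)) := by
  simp only [Finset.mem_image] at h1 h2
  obtain ⟨q, hq, rfl⟩ := h1
  obtain ⟨g1, g2, g3⟩ := verts_bounds (m+2) q hq
  obtain ⟨r, hr, hre⟩ := h2
  obtain ⟨f1, f2, f3'⟩ := verts_bounds (m+2) r hr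
  simp only [Prod.ext_iff] at hre ⊢
  try dsimp only at *
  omega

lemma dom_copy2 (D : Finset (ℤ × ℤ))
    (hdom : Dominates (m+4) D (sierpVerts (m+4) \ sierpCorners (m+4))) :
    Dominates (m+3)
      ((D ∩ (sierpVerts (m+3)).image (fun q => (q.1 + 2^(m+2), q.2))).image
        (fun q => (q.1 - 2^(m+2), q.2)))
      (sierpVerts (m+3) \ sierpCorners (m+3)) := by
  intro v hv
  rw [Finset.mem_sdiff] at hv
  obtain ⟨hvW, hvnc⟩ := hv
  rw [corners_mem] at hvnc
  push_neg at hvnc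
  obtain ⟨hnc1, hnc2, hnc3⟩ := hvnc
  have hb := verts_bounds (m+2) v hvW
  have hs : (0:ℤ) < 2^(m+2) := by positivity
  have hss : (2:ℤ)^(m+3) = 2^(m+2) + 2^(m+2) := by ring
  set v' : ℤ × ℤ := (v.1 + 2^(m+2), v.2) with hv'def
  have hv'Wx : v' ∈ (sierpVerts (m+3)).image (fun q => (q.1 + 2^(m+2), q.2)) :=
    Finset.mem_image.mpr ⟨v, hvW, rfl⟩
  have hginv : ∀ z : ℤ × ℤ, ((z.1 + 2^(m+2) - 2^(m+2) : ℤ), z.2) = z := by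
    intro z; simp
  have hmemD2 : v' ∈ D → v ∈ (D ∩ (sierpVerts (m+3)).image (fun q => (q.1 + 2^(m+2), q.2))).image
      (fun q => (q.1 - 2^(m+2), q.2)) := by
    intro hvD
    exact Finset.mem_image.mpr ⟨v', Finset.mem_inter.mpr ⟨hvD, hv'Wx⟩, hginv v⟩
  have hv' : v' ∈ sierpVerts (m+4) \ sierpCorners (m+4) := by
    rw [Finset.mem_sdiff]
    constructor
    · rw [show m+4 = m+2+2 from rfl, sierpVerts_eq]
      exact Finset.mem_union_left _ (Finset.mem_union_right _ hv'Wx)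
    · rw [corners_succ_mem]
      push_neg
      simp only [ne_eq, Prod.ext_iff, not_and] at hnc1 hnc2 hnc3 ⊢
      try dsimp only at hb ⊢
      simp only [hv'def]
      refine ⟨?_, ?_, ?_⟩ <;> intro h1 <;> omega
  have main : ∀ w z : ℤ × ℤ, (w, z) ∈ sierpEdges (m+4) → z = v' → w ∈ D →
      ∃ u' ∈ (D ∩ (sierpVerts (m+3)).image (fun q => (q.1 + 2^(m+2), q.2))).image
        (fun q => (q.1 - 2^(m+2), q.2)), (u', v) ∈ sierpEdges (m+3) := by
    intro w z hwz hzv hwD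
    rw [show m+4 = m+2+2 from rfl, sierpEdges_eq] at hwz
    simp only [Finset.mem_union, Finset.mem_image] at hwz
    rcases hwz with (hwz | ⟨e, he', heq⟩) | ⟨e, he', heq⟩
    · exfalso
      have h2 := (edges_mem_verts _ _ hwz).2
      rw [hzv] at h2
      have := inter_WWx m v' h2 hv'Wx
      rw [hv'def] at this
      simp only [Prod.ext_iff] at this
      simp only [ne_eq, Prod.ext_iff, not_and] at hnc1
      try dsimp only at this
      omega
    · -- x-shifted edge : the good case
      rw [Prod.ext_iff] at heq
      obtain ⟨hw1, hz1⟩ := heq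
      have he2v : e.2 = v := by
        rw [hzv, hv'def] at hz1
        have : ((e.2.1 + 2^(m+2) : ℤ), e.2.2) = (v.1 + 2^(m+2), v.2) := hz1
        simp only [Prod.ext_iff] at this ⊢
        try dsimp only at this
        omega
      have he1W := (edges_mem_verts _ _ he').1
      refine ⟨e.1, Finset.mem_image.mpr ⟨(e.1.1 + 2^(m+2), e.1.2), ?_, hginv e.1⟩, ?_⟩
      · refine Finset.mem_inter.mpr ⟨?_, Finset.mem_image.mpr ⟨e.1, he1W, rfl⟩⟩
        have hw1' : ((e.1.1 + 2^(m+2) : ℤ), e.1.2) = w := hw1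
        rw [hw1']
        exact hwD
      · rw [← he2v]
        exact he'
    · exfalso
      rw [Prod.ext_iff] at heq
      obtain ⟨-, hz1⟩ := heq
      have hzWy : z ∈ (sierpVerts (m+3)).image (fun q => (q.1, q.2 + 2^(m+2))) := by
        refine Finset.mem_image.mpr ⟨e.2, (edges_mem_verts _ _ he').2, hz1⟩
      rw [hzv] at hzWy
      have := inter_WxWy m v' hv'Wx hzWy
      rw [hv'def] at this
      simp only [Prod.ext_iff] at this
      simp only [ne_eq, Prod.ext_iff, not_and] at hnc3
      try dsimp only at this
      omega
  have main2 : ∀ w z : ℤ × ℤ, (w, z) ∈ sierpEdges (m+4) → w = v' → z ∈ D →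
      ∃ u' ∈ (D ∩ (sierpVerts (m+3)).image (fun q => (q.1 + 2^(m+2), q.2))).image
        (fun q => (q.1 - 2^(m+2), q.2)), (v, u') ∈ sierpEdges (m+3) := by
    intro w z hwz hwv hzD
    rw [show m+4 = m+2+2 from rfl, sierpEdges_eq] at hwz
    simp only [Finset.mem_union, Finset.mem_image] at hwz
    rcases hwz with (hwz | ⟨e, he', heq⟩) | ⟨e, he', heq⟩
    · exfalso
      have h2 := (edges_mem_verts _ _ hwz).1
      rw [hwv] at h2
      have := inter_WWx m v' h2 hv'Wx
      rw [hv'def] at this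
      simp only [Prod.ext_iff] at this
      simp only [ne_eq, Prod.ext_iff, not_and] at hnc1
      try dsimp only at this
      omega
    · rw [Prod.ext_iff] at heq
      obtain ⟨hw1, hz1⟩ := heq
      have he1v : e.1 = v := by
        rw [hwv, hv'def] at hw1
        have : ((e.1.1 + 2^(m+2) : ℤ), e.1.2) = (v.1 + 2^(m+2), v.2) := hw1
        simp only [Prod.ext_iff] at this ⊢
        try dsimp only at this
        omega
      have he2W := (edges_mem_verts _ _ he').2
      refine ⟨e.2, Finset.mem_image.mpr ⟨(e.2.1 + 2^(m+2), e.2.2), ?_, hginv e.2⟩, ?_⟩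
      · refine Finset.mem_inter.mpr ⟨?_, Finset.mem_image.mpr ⟨e.2, he2W, rfl⟩⟩
        have hz1' : ((e.2.1 + 2^(m+2) : ℤ), e.2.2) = z := hz1
        rw [hz1']
        exact hzD
      · rw [← he1v]
        exact he'
    · exfalso
      rw [Prod.ext_iff] at heq
      obtain ⟨hw1, -⟩ := heq
      have hwWy : w ∈ (sierpVerts (m+3)).image (fun q => (q.1, q.2 + 2^(m+2))) := by
        refine Finset.mem_image.mpr ⟨e.1, (edges_mem_verts _ _ he').1, hw1⟩
      rw [hwv] at hwWy
      have := inter_WxWy m v' hv'Wx hwWy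
      rw [hv'def] at this
      simp only [Prod.ext_iff] at this
      simp only [ne_eq, Prod.ext_iff, not_and] at hnc3
      try dsimp only at this
      omega
  rcases hdom v' hv' with h1 | ⟨u, hu, he⟩
  · exact Or.inl (hmemD2 h1)
  · rcases he with he | he
    · obtain ⟨u', hu', hedge⟩ := main u v' he rfl hu
      exact Or.inr ⟨u', hu', Or.inl hedge⟩
    · obtain ⟨u', hu', hedge⟩ := main2 v' u he rfl hu
      exact Or.inr ⟨u', hu', Or.inr hedge⟩

end Step2

section Step3
variable (m : ℕ)

lemma dom_copy3 (D : Finset (ℤ × ℤ))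
    (hdom : Dominates (m+4) D (sierpVerts (m+4) \ sierpCorners (m+4))) :
    Dominates (m+3)
      ((D ∩ (sierpVerts (m+3)).image (fun q => (q.1, q.2 + 2^(m+2)))).image
        (fun q => (q.1, q.2 - 2^(m+2))))
      (sierpVerts (m+3) \ sierpCorners (m+3)) := by
  intro v hv
  rw [Finset.mem_sdiff] at hv
  obtain ⟨hvW, hvnc⟩ := hv
  rw [corners_mem] at hvnc
  push_neg at hvnc
  obtain ⟨hnc1, hnc2, hnc3⟩ := hvnc
  have hb := verts_bounds (m+2) v hvW
  have hs : (0:ℤ) < 2^(m+2) := by positivity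
  have hss : (2:ℤ)^(m+3) = 2^(m+2) + 2^(m+2) := by ring
  set v' : ℤ × ℤ := (v.1, v.2 + 2^(m+2)) with hv'def
  have hv'Wy : v' ∈ (sierpVerts (m+3)).image (fun q => (q.1, q.2 + 2^(m+2))) :=
    Finset.mem_image.mpr ⟨v, hvW, rfl⟩
  have hginv : ∀ z : ℤ × ℤ, ((z.1 : ℤ), z.2 + 2^(m+2) - 2^(m+2)) = z := by
    intro z; simp
  have hmemD2 : v' ∈ D → v ∈ (D ∩ (sierpVerts (m+3)).image (fun q => (q.1, q.2 + 2^(m+2)))).image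
      (fun q => (q.1, q.2 - 2^(m+2))) := by
    intro hvD
    exact Finset.mem_image.mpr ⟨v', Finset.mem_inter.mpr ⟨hvD, hv'Wy⟩, hginv v⟩
  have hv' : v' ∈ sierpVerts (m+4) \ sierpCorners (m+4) := by
    rw [Finset.mem_sdiff]
    constructor
    · rw [show m+4 = m+2+2 from rfl, sierpVerts_eq]
      exact Finset.mem_union_right _ hv'Wy
    · rw [corners_succ_mem]
      push_neg
      simp only [ne_eq, Prod.ext_iff, not_and] at hnc1 hnc2 hnc3 ⊢
      try dsimp only at hb ⊢
      simp only [hv'def]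
      refine ⟨?_, ?_, ?_⟩ <;> intro h1 <;> omega
  have main : ∀ w z : ℤ × ℤ, (w, z) ∈ sierpEdges (m+4) → z = v' → w ∈ D →
      ∃ u' ∈ (D ∩ (sierpVerts (m+3)).image (fun q => (q.1, q.2 + 2^(m+2)))).image
        (fun q => (q.1, q.2 - 2^(m+2))), (u', v) ∈ sierpEdges (m+3) := by
    intro w z hwz hzv hwD
    rw [show m+4 = m+2+2 from rfl, sierpEdges_eq] at hwz
    simp only [Finset.mem_union, Finset.mem_image] at hwz
    rcases hwz with (hwz | ⟨e, he', heq⟩) | ⟨e, he', heq⟩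
    · exfalso
      have h2 := (edges_mem_verts _ _ hwz).2
      rw [hzv] at h2
      have := inter_WWy m v' h2 hv'Wy
      rw [hv'def] at this
      simp only [Prod.ext_iff] at this
      simp only [ne_eq, Prod.ext_iff, not_and] at hnc1
      try dsimp only at this
      omega
    · exfalso
      rw [Prod.ext_iff] at heq
      obtain ⟨-, hz1⟩ := heq
      have hzWx : z ∈ (sierpVerts (m+3)).image (fun q => (q.1 + 2^(m+2), q.2)) := by
        refine Finset.mem_image.mpr ⟨e.2, (edges_mem_verts _ _ he').2, hz1⟩
      rw [hzv] at hzWx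
      have := inter_WxWy m v' hzWx hv'Wy
      rw [hv'def] at this
      simp only [Prod.ext_iff] at this
      simp only [ne_eq, Prod.ext_iff, not_and] at hnc2
      try dsimp only at this
      omega
    · -- y-shifted edge : the good case
      rw [Prod.ext_iff] at heq
      obtain ⟨hw1, hz1⟩ := heq
      have he2v : e.2 = v := by
        rw [hzv, hv'def] at hz1
        have : ((e.2.1 : ℤ), e.2.2 + 2^(m+2)) = (v.1, v.2 + 2^(m+2)) := hz1
        simp only [Prod.ext_iff] at this ⊢
        try dsimp only at this
        omega
      have he1W := (edges_mem_verts _ _ he').1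
      refine ⟨e.1, Finset.mem_image.mpr ⟨(e.1.1, e.1.2 + 2^(m+2)), ?_, hginv e.1⟩, ?_⟩
      · refine Finset.mem_inter.mpr ⟨?_, Finset.mem_image.mpr ⟨e.1, he1W, rfl⟩⟩
        have hw1' : ((e.1.1 : ℤ), e.1.2 + 2^(m+2)) = w := hw1
        rw [hw1']
        exact hwD
      · rw [← he2v]
        exact he'
  have main2 : ∀ w z : ℤ × ℤ, (w, z) ∈ sierpEdges (m+4) → w = v' → z ∈ D →
      ∃ u' ∈ (D ∩ (sierpVerts (m+3)).image (fun q => (q.1, q.2 + 2^(m+2)))).image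
        (fun q => (q.1, q.2 - 2^(m+2))), (v, u') ∈ sierpEdges (m+3) := by
    intro w z hwz hwv hzD
    rw [show m+4 = m+2+2 from rfl, sierpEdges_eq] at hwz
    simp only [Finset.mem_union, Finset.mem_image] at hwz
    rcases hwz with (hwz | ⟨e, he', heq⟩) | ⟨e, he', heq⟩
    · exfalso
      have h2 := (edges_mem_verts _ _ hwz).1
      rw [hwv] at h2
      have := inter_WWy m v' h2 hv'Wy
      rw [hv'def] at this
      simp only [Prod.ext_iff] at this
      simp only [ne_eq, Prod.ext_iff, not_and] at hnc1
      try dsimp only at this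
      omega
    · exfalso
      rw [Prod.ext_iff] at heq
      obtain ⟨hw1, -⟩ := heq
      have hwWx : w ∈ (sierpVerts (m+3)).image (fun q => (q.1 + 2^(m+2), q.2)) := by
        refine Finset.mem_image.mpr ⟨e.1, (edges_mem_verts _ _ he').1, hw1⟩
      rw [hwv] at hwWx
      have := inter_WxWy m v' hwWx hv'Wy
      rw [hv'def] at this
      simp only [Prod.ext_iff] at this
      simp only [ne_eq, Prod.ext_iff, not_and] at hnc2
      try dsimp only at this
      omega
    · rw [Prod.ext_iff] at heq
      obtain ⟨hw1, hz1⟩ := heq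
      have he1v : e.1 = v := by
        rw [hwv, hv'def] at hw1
        have : ((e.1.1 : ℤ), e.1.2 + 2^(m+2)) = (v.1, v.2 + 2^(m+2)) := hw1
        simp only [Prod.ext_iff] at this ⊢
        try dsimp only at this
        omega
      have he2W := (edges_mem_verts _ _ he').2
      refine ⟨e.2, Finset.mem_image.mpr ⟨(e.2.1, e.2.2 + 2^(m+2)), ?_, hginv e.2⟩, ?_⟩
      · refine Finset.mem_inter.mpr ⟨?_, Finset.mem_image.mpr ⟨e.2, he2W, rfl⟩⟩
        have hz1' : ((e.2.1 : ℤ), e.2.2 + 2^(m+2)) = z := hz1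
        rw [hz1']
        exact hzD
      · rw [← he1v]
        exact he'
  rcases hdom v' hv' with h1 | ⟨u, hu, he⟩
  · exact Or.inl (hmemD2 h1)
  · rcases he with he | he
    · obtain ⟨u', hu', hedge⟩ := main u v' he rfl hu
      exact Or.inr ⟨u', hu', Or.inl hedge⟩
    · obtain ⟨u', hu', hedge⟩ := main2 v' u he rfl hu
      exact Or.inr ⟨u', hu', Or.inr hedge⟩

end Step3

lemma key_ineq (A B C x y z : ℕ) (hA : A ≤ 1) (hB : B ≤ 1) (hC : C ≤ 1)
    (hx : x ≤ 1) (hy : y ≤ 1) (hz : z ≤ 1) :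
    f3 (A+B+C) + (x+y+z) ≤ f3 (A+x+y) + f3 (x+B+z) + f3 (y+z+C) := by
  interval_cases A <;> interval_cases B <;> interval_cases C <;>
    interval_cases x <;> interval_cases y <;> interval_cases z <;> decide

lemma card_inter_singleton (D : Finset (ℤ × ℤ)) (p : ℤ × ℤ) :
    (D ∩ {p}).card = if p ∈ D then 1 else 0 := by
  split
  · rw [Finset.inter_singleton_of_mem (by assumption)]
    simp
  · rw [Finset.inter_singleton_of_notMem (by assumption)]
    simp

lemma Pm_step (m : ℕ) (ih : Pm m) : Pm (m+1) := by
  intro D hD hdom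
  have hs : (0:ℤ) < 2^(m+2) := by positivity
  have hss : (2:ℤ)^(m+3) = 2^(m+2) + 2^(m+2) := by ring
  set W := sierpVerts (m+3) with hW
  set Wx := (sierpVerts (m+3)).image (fun q => (q.1 + 2^(m+2), q.2)) with hWx
  set Wy := (sierpVerts (m+3)).image (fun q => (q.1, q.2 + 2^(m+2))) with hWy
  set D1 := D ∩ W with hD1
  set Dx := D ∩ Wx with hDx
  set Dy := D ∩ Wy with hDy
  set D2 := Dx.image (fun q => (q.1 - 2^(m+2), q.2)) with hD2
  set D3 := Dy.image (fun q => (q.1, q.2 - 2^(m+2))) with hD3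
  -- domination of copies
  have hdom1 := dom_copy1 m D hdom
  have hdom2 := dom_copy2 m D hdom
  have hdom3 := dom_copy3 m D hdom
  -- subset facts
  have hD1sub : D1 ⊆ sierpVerts (m+3) := Finset.inter_subset_right
  have hD2sub : D2 ⊆ sierpVerts (m+3) := by
    intro q hq
    obtain ⟨p, hp, rfl⟩ := Finset.mem_image.mp hq
    obtain ⟨w, hw, rfl⟩ := Finset.mem_image.mp (Finset.mem_inter.mp hp).2
    simpa using hw
  have hD3sub : D3 ⊆ sierpVerts (m+3) := by
    intro q hq
    obtain ⟨p, hp, rfl⟩ := Finset.mem_image.mp hq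
    obtain ⟨w, hw, rfl⟩ := Finset.mem_image.mp (Finset.mem_inter.mp hp).2
    simpa using hw
  -- apply induction hypothesis
  have h1 := ih D1 hD1sub hdom1
  have h2 := ih D2 hD2sub hdom2
  have h3 := ih D3 hD3sub hdom3
  -- membership characterizations
  have hD2mem : ∀ q : ℤ × ℤ, (q ∈ D2 ↔ ((q.1 + 2^(m+2), q.2) ∈ D ∧ (q.1 + 2^(m+2), q.2) ∈ Wx)) := by
    intro q
    constructor
    · intro hq
      obtain ⟨p, hp, rfl⟩ := Finset.mem_image.mp hq
      have hpe : ((p.1 - 2^(m+2) + 2^(m+2) : ℤ), p.2) = p := by simp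
      rw [hpe]
      exact Finset.mem_inter.mp hp
    · rintro ⟨hq1, hq2⟩
      exact Finset.mem_image.mpr ⟨(q.1 + 2^(m+2), q.2),
        Finset.mem_inter.mpr ⟨hq1, hq2⟩, by simp⟩
  have hD3mem : ∀ q : ℤ × ℤ, (q ∈ D3 ↔ ((q.1, q.2 + 2^(m+2)) ∈ D ∧ (q.1, q.2 + 2^(m+2)) ∈ Wy)) := by
    intro q
    constructor
    · intro hq
      obtain ⟨p, hp, rfl⟩ := Finset.mem_image.mp hq
      have hpe : ((p.1 : ℤ), p.2 - 2^(m+2) + 2^(m+2)) = p := by simp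
      rw [hpe]
      exact Finset.mem_inter.mp hp
    · rintro ⟨hq1, hq2⟩
      exact Finset.mem_image.mpr ⟨(q.1, q.2 + 2^(m+2)),
        Finset.mem_inter.mpr ⟨hq1, hq2⟩, by simp⟩
  -- corner membership facts
  have haW : ((0:ℤ),(0:ℤ)) ∈ W := cornerA_mem _
  have hbW : ((2^(m+2):ℤ), (0:ℤ)) ∈ W := cornerB_mem (m+2)
  have hcW : ((0:ℤ), (2^(m+2):ℤ)) ∈ W := cornerC_mem (m+2)
  have hbWx : ((2^(m+2):ℤ), (0:ℤ)) ∈ Wx := Finset.mem_image.mpr ⟨(0,0), haW, by simp⟩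
  have hBWx : ((2^(m+2)+2^(m+2):ℤ), (0:ℤ)) ∈ Wx := Finset.mem_image.mpr ⟨(2^(m+2),0), hbW, by simp⟩
  have hrWx : ((2^(m+2):ℤ), (2^(m+2):ℤ)) ∈ Wx := Finset.mem_image.mpr ⟨(0,2^(m+2)), hcW, by simp⟩
  have hcWy : ((0:ℤ), (2^(m+2):ℤ)) ∈ Wy := Finset.mem_image.mpr ⟨(0,0), haW, by simp⟩
  have hrWy : ((2^(m+2):ℤ), (2^(m+2):ℤ)) ∈ Wy := Finset.mem_image.mpr ⟨(2^(m+2),0), hbW, by simp⟩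
  have hCWy : ((0:ℤ), (2^(m+2)+2^(m+2):ℤ)) ∈ Wy := Finset.mem_image.mpr ⟨(0,2^(m+2)), hcW, by simp⟩
  -- cc rewrites
  have e1 : cc (2^(m+2)) D1 =
      (if ((0:ℤ),(0:ℤ)) ∈ D then 1 else 0) + (if ((2^(m+2):ℤ),(0:ℤ)) ∈ D then 1 else 0) +
        (if ((0:ℤ),(2^(m+2):ℤ)) ∈ D then 1 else 0) := by
    unfold cc
    rw [hD1]
    simp only [Finset.mem_inter, haW, hbW, hcW, and_true]
  have e2 : cc (2^(m+2)) D2 =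
      (if ((2^(m+2):ℤ),(0:ℤ)) ∈ D then 1 else 0) + (if ((2^(m+2)+2^(m+2):ℤ),(0:ℤ)) ∈ D then 1 else 0) +
        (if ((2^(m+2):ℤ),(2^(m+2):ℤ)) ∈ D then 1 else 0) := by
    unfold cc
    simp only [show ((0:ℤ),(0:ℤ)) ∈ D2 ↔ ((2^(m+2):ℤ),(0:ℤ)) ∈ D by
          rw [hD2mem (0,0)]; simp only [zero_add]; exact and_iff_left hbWx,
        show ((2^(m+2):ℤ),(0:ℤ)) ∈ D2 ↔ ((2^(m+2)+2^(m+2):ℤ),(0:ℤ)) ∈ D by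
          rw [hD2mem (2^(m+2),0)]; exact and_iff_left hBWx,
        show ((0:ℤ),(2^(m+2):ℤ)) ∈ D2 ↔ ((2^(m+2):ℤ),(2^(m+2):ℤ)) ∈ D by
          rw [hD2mem (0,2^(m+2))]; simp only [zero_add]; exact and_iff_left hrWx]
  have e3 : cc (2^(m+2)) D3 =
      (if ((0:ℤ),(2^(m+2):ℤ)) ∈ D then 1 else 0) + (if ((2^(m+2):ℤ),(2^(m+2):ℤ)) ∈ D then 1 else 0) +
        (if ((0:ℤ),(2^(m+2)+2^(m+2):ℤ)) ∈ D then 1 else 0) := by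
    unfold cc
    simp only [show ((0:ℤ),(0:ℤ)) ∈ D3 ↔ ((0:ℤ),(2^(m+2):ℤ)) ∈ D by
          rw [hD3mem (0,0)]; simp only [zero_add]; exact and_iff_left hcWy,
        show ((2^(m+2):ℤ),(0:ℤ)) ∈ D3 ↔ ((2^(m+2):ℤ),(2^(m+2):ℤ)) ∈ D by
          rw [hD3mem (2^(m+2),0)]; simp only [zero_add]; exact and_iff_left hrWy,
        show ((0:ℤ),(2^(m+2):ℤ)) ∈ D3 ↔ ((0:ℤ),(2^(m+2)+2^(m+2):ℤ)) ∈ D by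
          rw [hD3mem (0,2^(m+2))]; exact and_iff_left hCWy]
  have e4 : cc (2^(m+1+2)) D =
      (if ((0:ℤ),(0:ℤ)) ∈ D then 1 else 0) + (if ((2^(m+2)+2^(m+2):ℤ),(0:ℤ)) ∈ D then 1 else 0) +
        (if ((0:ℤ),(2^(m+2)+2^(m+2):ℤ)) ∈ D then 1 else 0) := by
    unfold cc
    rw [show (2:ℤ)^(m+1+2) = 2^(m+2)+2^(m+2) from by ring]
  -- counting identity
  have hWWxeq : W ∩ Wx = {((2^(m+2):ℤ), (0:ℤ))} := by
    apply Finset.Subset.antisymm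
    · intro p hp
      rw [Finset.mem_inter] at hp
      rw [Finset.mem_singleton]
      exact inter_WWx m p hp.1 hp.2
    · intro p hp
      rw [Finset.mem_singleton] at hp
      subst hp
      exact Finset.mem_inter.mpr ⟨hbW, hbWx⟩
  have hWWyeq : W ∩ Wy = {((0:ℤ), (2^(m+2):ℤ))} := by
    apply Finset.Subset.antisymm
    · intro p hp
      rw [Finset.mem_inter] at hp
      rw [Finset.mem_singleton]
      exact inter_WWy m p hp.1 hp.2
    · intro p hp
      rw [Finset.mem_singleton] at hp
      subst hp
      exact Finset.mem_inter.mpr ⟨hcW, hcWy⟩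
  have hWxWyeq : Wx ∩ Wy = {((2^(m+2):ℤ), (2^(m+2):ℤ))} := by
    apply Finset.Subset.antisymm
    · intro p hp
      rw [Finset.mem_inter] at hp
      rw [Finset.mem_singleton]
      exact inter_WxWy m p hp.1 hp.2
    · intro p hp
      rw [Finset.mem_singleton] at hp
      subst hp
      exact Finset.mem_inter.mpr ⟨hrWx, hrWy⟩
  have hDunion : D1 ∪ Dx ∪ Dy = D := by
    rw [hD1, hDx, hDy, ← Finset.inter_union_distrib_left, ← Finset.inter_union_distrib_left]
    apply Finset.inter_eq_left.mpr
    intro p hp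
    have := hD hp
    rw [show m+1+3 = m+2+2 from rfl, sierpVerts_eq] at this
    exact this
  have hinter1 : D1 ∩ Dx = D ∩ {((2^(m+2):ℤ), (0:ℤ))} := by
    rw [hD1, hDx, Finset.inter_inter_inter_comm, Finset.inter_self, hWWxeq]
  have hinter2 : (D1 ∪ Dx) ∩ Dy = (D ∩ {((0:ℤ), (2^(m+2):ℤ))}) ∪ (D ∩ {((2^(m+2):ℤ), (2^(m+2):ℤ))}) := by
    rw [Finset.union_inter_distrib_right, hD1, hDx, hDy,
      Finset.inter_inter_inter_comm, Finset.inter_self, hWWyeq,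
      Finset.inter_inter_inter_comm, Finset.inter_self, hWxWyeq]
  have hcard1 : (D1 ∪ Dx).card + (D ∩ {((2^(m+2):ℤ), (0:ℤ))}).card = D1.card + Dx.card := by
    rw [← hinter1]
    exact Finset.card_union_add_card_inter _ _
  have hcard2 : D.card + ((D1 ∪ Dx) ∩ Dy).card = (D1 ∪ Dx).card + Dy.card := by
    conv_lhs => rw [← hDunion]
    exact Finset.card_union_add_card_inter _ _
  have hdisj : Disjoint (D ∩ {((0:ℤ), (2^(m+2):ℤ))}) (D ∩ {((2^(m+2):ℤ), (2^(m+2):ℤ))}) := by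
    rw [Finset.disjoint_left]
    intro p hp1 hp2
    rw [Finset.mem_inter, Finset.mem_singleton] at hp1 hp2
    rw [hp1.2] at hp2
    have := hp2.2
    rw [Prod.ext_iff] at this
    simp only at this
    omega
  have hcard3 : ((D1 ∪ Dx) ∩ Dy).card
      = (D ∩ {((0:ℤ), (2^(m+2):ℤ))}).card + (D ∩ {((2^(m+2):ℤ), (2^(m+2):ℤ))}).card := by
    rw [hinter2]
    exact Finset.card_union_of_disjoint hdisj
  have hcardD2 : D2.card = Dx.card := by
    rw [hD2]
    apply Finset.card_image_of_injective
    intro p q hpq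
    rw [Prod.ext_iff] at hpq ⊢
    simp only at hpq
    omega
  have hcardD3 : D3.card = Dy.card := by
    rw [hD3]
    apply Finset.card_image_of_injective
    intro p q hpq
    rw [Prod.ext_iff] at hpq ⊢
    simp only at hpq
    omega
  -- assemble
  rw [e1] at h1
  rw [e2] at h2
  rw [e3] at h3
  rw [e4]
  rw [card_inter_singleton] at hcard1 hcard3
  rw [card_inter_singleton] at hcard3
  have hkey := key_ineq
    (if ((0:ℤ),(0:ℤ)) ∈ D then 1 else 0)
    (if ((2^(m+2)+2^(m+2):ℤ),(0:ℤ)) ∈ D then 1 else 0)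
    (if ((0:ℤ),(2^(m+2)+2^(m+2):ℤ)) ∈ D then 1 else 0)
    (if ((2^(m+2):ℤ),(0:ℤ)) ∈ D then 1 else 0)
    (if ((0:ℤ),(2^(m+2):ℤ)) ∈ D then 1 else 0)
    (if ((2^(m+2):ℤ),(2^(m+2):ℤ)) ∈ D then 1 else 0)
    (by split <;> omega) (by split <;> omega) (by split <;> omega)
    (by split <;> omega) (by split <;> omega) (by split <;> omega)
  have hpow : (3:ℕ)^(m+1+1) = 3^(m+1) + 3^(m+1) + 3^(m+1) := by ring
  generalize hF0 : f3 ((if ((0:ℤ),(0:ℤ)) ∈ D then 1 else 0) +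
      (if ((2^(m+2)+2^(m+2):ℤ),(0:ℤ)) ∈ D then 1 else 0) +
      (if ((0:ℤ),(2^(m+2)+2^(m+2):ℤ)) ∈ D then 1 else 0)) = F0 at hkey ⊢
  generalize hF1 : f3 ((if ((0:ℤ),(0:ℤ)) ∈ D then 1 else 0) +
      (if ((2^(m+2):ℤ),(0:ℤ)) ∈ D then 1 else 0) +
      (if ((0:ℤ),(2^(m+2):ℤ)) ∈ D then 1 else 0)) = F1 at hkey h1
  generalize hF2 : f3 ((if ((2^(m+2):ℤ),(0:ℤ)) ∈ D then 1 else 0) +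
      (if ((2^(m+2)+2^(m+2):ℤ),(0:ℤ)) ∈ D then 1 else 0) +
      (if ((2^(m+2):ℤ),(2^(m+2):ℤ)) ∈ D then 1 else 0)) = F2 at hkey h2
  generalize hF3 : f3 ((if ((0:ℤ),(2^(m+2):ℤ)) ∈ D then 1 else 0) +
      (if ((2^(m+2):ℤ),(2^(m+2):ℤ)) ∈ D then 1 else 0) +
      (if ((0:ℤ),(2^(m+2)+2^(m+2):ℤ)) ∈ D then 1 else 0)) = F3 at hkey h3
  generalize hG : (3:ℕ)^(m+1) = G at h1 h2 h3 hpow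
  rw [hpow]
  omega

lemma Pm_all : ∀ m, Pm m := by
  intro m
  induction m with
  | zero => exact Pm_zero
  | succ k ih => exact Pm_step k ih

lemma gamma_eq (m : ℕ) : dominationNumber _ (sierpGraph (m+3)) = 3^(m+1) := by
  unfold dominationNumber
  have hedge_ne : ∀ u v : ℤ × ℤ, ((u, v) ∈ sierpEdges (m+3) ∨ (v, u) ∈ sierpEdges (m+3)) →
      u ≠ v := by
    intro u v h
    rcases h with h | h
    · exact edges_ne _ _ h
    · exact (edges_ne _ _ h).symm
  -- upper bound witness
  have hsub := sierpDom_subset m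
  set D' : Finset {p : ℤ × ℤ // p ∈ sierpVerts (m+3)} :=
    (sierpVerts (m+3)).attach.filter (fun v => v.1 ∈ sierpDom m) with hD'
  have hD'card : D'.card = 3^(m+1) := by
    rw [← sierpDom_card m]
    apply Finset.card_bij (fun v _ => v.1)
    · intro a ha
      rw [hD', Finset.mem_filter] at ha
      exact ha.2
    · intro a ha b hb hab
      exact Subtype.ext hab
    · intro b hb
      exact ⟨⟨b, hsub hb⟩, Finset.mem_filter.mpr ⟨Finset.mem_attach _ _, hb⟩, rfl⟩
  have hD'dom : IsDominatingSet (sierpGraph (m+3)) D' := by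
    intro v
    rcases sierpDom_dominates m v.1 v.2 with h1 | ⟨u, hu, he⟩
    · exact Or.inl (Finset.mem_filter.mpr ⟨Finset.mem_attach _ _, h1⟩)
    · refine Or.inr ⟨⟨u, hsub hu⟩, Finset.mem_filter.mpr ⟨Finset.mem_attach _ _, hu⟩, (show _ ≠ _ ∧ _ from ⟨?_, he⟩)⟩
      intro hc
      exact hedge_ne u v.1 he (congrArg Subtype.val hc)
  have hmem : (3:ℕ)^(m+1) ∈ {k | ∃ D : Finset {p : ℤ × ℤ // p ∈ sierpVerts (m+3)},
      IsDominatingSet (sierpGraph (m+3)) D ∧ D.card = k} := ⟨D', hD'dom, hD'card⟩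
  -- lower bound
  have hlow : ∀ k ∈ {k | ∃ D : Finset {p : ℤ × ℤ // p ∈ sierpVerts (m+3)},
      IsDominatingSet (sierpGraph (m+3)) D ∧ D.card = k}, 3^(m+1) ≤ k := by
    rintro k ⟨E, hEdom, rfl⟩
    set D : Finset (ℤ × ℤ) := E.image Subtype.val with hDdef
    have hDsub : D ⊆ sierpVerts (m+3) := by
      intro p hp
      obtain ⟨q, hq, rfl⟩ := Finset.mem_image.mp hp
      exact q.2
    have hDdom : Dominates (m+3) D (sierpVerts (m+3) \ sierpCorners (m+3)) := by
      intro v hv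
      have hvV : v ∈ sierpVerts (m+3) := (Finset.mem_sdiff.mp hv).1
      rcases hEdom ⟨v, hvV⟩ with h1 | ⟨u, hu, hadj⟩
      · exact Or.inl (Finset.mem_image.mpr ⟨⟨v, hvV⟩, h1, rfl⟩)
      · exact Or.inr ⟨u.1, Finset.mem_image.mpr ⟨u, hu, rfl⟩, (show _ ≠ _ ∧ _ from hadj).2⟩
    have := Pm_all m D hDsub hDdom
    have hcard : D.card = E.card := Finset.card_image_of_injective _ Subtype.val_injective
    omega
  have hne : {k | ∃ D : Finset {p : ℤ × ℤ // p ∈ sierpVerts (m+3)},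
      IsDominatingSet (sierpGraph (m+3)) D ∧ D.card = k}.Nonempty := ⟨_, hmem⟩
  exact le_antisymm (Nat.sInf_le hmem) (hlow _ (Nat.sInf_mem hne))

theorem sierp_domination_recursion (n : ℕ) (hn : 4 ≤ n) :
    dominationNumber _ (sierpGraph (n + 1)) = 3 * dominationNumber _ (sierpGraph n) := by
  obtain ⟨m, rfl⟩ : ∃ m, n = m + 3 := ⟨n - 3, by omega⟩
  rw [show m + 3 + 1 = (m + 1) + 3 from rfl, gamma_eq, gamma_eq]
  ring
end
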